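/- arXiv:2001.03252 — 5 statements merged into one kernel-verified Lean document; each statement's English description precedes it below -/
import Mathlib

section
/- Let P be a set of 2n distinct points in the Euclidean plane in general position. For distinct v, w ∈ P, the edge {v,w} is infeasible (i.e., contained in no perfect non-crossing matching of P) if and only if (1) both v and w are vertices of the convex hull of P, and (2) the number of points of P lying strictly on each of the two open sides of the line through v and w is odd. -/
noncomputable section

/-- The Euclidean plane. -/
abbrev Pt : Type := EuclideanSpace ℝ (Fin 2)

/-- The determinant of two plane vectors (twice the signed area). -/
def det2 (u v : Pt) : ℝ := u 0 * v 1 - u 1 * v 0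

/-- `P` is in general position: no three (distinct) points of `P` are collinear. -/
def GenPos (P : Finset Pt) : Prop :=
  ∀ a ∈ P, ∀ b ∈ P, ∀ c ∈ P, a ≠ b → a ≠ c → b ≠ c → ¬ Collinear ℝ ({a, b, c} : Set Pt)

/-- `m` encodes a perfect non-crossing matching of the point set `P`: it is a fixed-point free
involution of `P`, and the closed segments induced by two distinct edges are disjoint. -/
def IsNCMatching (P : Finset Pt) (m : Pt → Pt) : Prop :=
  (∀ p ∈ P, m p ∈ P) ∧ (∀ p ∈ P, m (m p) = p) ∧ (∀ p ∈ P, m p ≠ p) ∧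
  (∀ p ∈ P, ∀ q ∈ P, q ≠ p → q ≠ m p →
    segment ℝ p (m p) ∩ segment ℝ q (m q) = ∅)

/-- The edge `{v, w}` is feasible: some perfect non-crossing matching of `P` contains it. -/
def Feasible (P : Finset Pt) (v w : Pt) : Prop :=
  ∃ m : Pt → Pt, IsNCMatching P m ∧ m v = w

/-!
If a non-crossing matching contains `vw` and both `v` and `w` are hull vertices, no other edge can
cross the line `vw`: it would meet it either on the segment `vw`, or beyond `v` or `w`, which puts
that endpoint in the convex hull of the other points. So each side is matched within itself and has
even size.

Conversely, the points on one side of a line through `v` can be matched without crossings by sorting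
them by angle around `v` and pairing consecutive ones; this handles even sides. If the sides are odd
and `v` is not a hull vertex, the points `a` and `b` of the two sides that come angularly closest to
the ray from `v` away from `w` span an edge crossing that ray, hence missing `vw`, and lying beyond
every other point of either side; the rest of each side is even and is matched by the sweep.
-/

open Finset

lemma det2_comm (x y : Pt) : det2 x y = -det2 y x := by
  simp only [det2]; ring

lemma det2_self (x : Pt) : det2 x x = 0 := by
  simp only [det2]; ring

lemma det2_neg_left (u x : Pt) : det2 (-u) x = -det2 u x := by
  simp only [det2, PiLp.neg_apply]; ring

lemma isLinearMap_det2 (u : Pt) : IsLinearMap ℝ (det2 u) where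
  map_add x y := by simp only [det2, PiLp.add_apply]; ring
  map_smul c x := by simp only [det2, PiLp.smul_apply, smul_eq_mul]; ring

lemma ne_of_det2_sub_ne_zero {u p v : Pt} (h : det2 u (p - v) ≠ 0) : p ≠ v := by
  rintro rfl
  simp [det2] at h

lemma exists_eq_smul_of_det2_eq_zero {u x : Pt} (hu : u ≠ 0) (h : det2 u x = 0) :
    ∃ t : ℝ, x = t • u := by
  have hu' : u 0 ≠ 0 ∨ u 1 ≠ 0 := by
    by_contra! hc
    exact hu (by ext i; fin_cases i <;> simp [hc.1, hc.2])
  simp only [det2] at h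
  rcases hu' with h0 | h1
  · refine ⟨x 0 / u 0, ?_⟩
    ext i
    fin_cases i
    · simp [h0]
    · simp; field_simp; linarith
  · refine ⟨x 1 / u 1, ?_⟩
    ext i
    fin_cases i
    · simp; field_simp; linarith
    · simp [h1]

lemma collinear_of_det2_eq_zero {a b c : Pt} (h : det2 (b - a) (c - a) = 0) :
    Collinear ℝ ({a, b, c} : Set Pt) := by
  rcases eq_or_ne b a with rfl | hab
  · simpa using collinear_pair ℝ b c
  obtain ⟨t, ht⟩ := exists_eq_smul_of_det2_eq_zero (sub_ne_zero.2 hab) h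
  have hc : c = AffineMap.lineMap a b t := by
    rw [AffineMap.lineMap_apply, vsub_eq_sub, vadd_eq_add, ← ht, sub_add_cancel]
  rw [show ({a, b, c} : Set Pt) = {c, a, b} by grind, hc]
  exact collinear_insert_of_mem_affineSpan_pair (AffineMap.lineMap_mem_affineSpan_pair _ _ _)

lemma GenPos.det2_ne_zero {P : Finset Pt} (hgp : GenPos P) {a b c : Pt} (ha : a ∈ P)
    (hb : b ∈ P) (hc : c ∈ P) (hab : a ≠ b) (hac : a ≠ c) (hbc : b ≠ c) :
    det2 (b - a) (c - a) ≠ 0 :=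
  fun h => hgp a ha b hb c hc hab hac hbc (collinear_of_det2_eq_zero h)

lemma convex_setOf_apply_sub_mem {E : Type*} [AddCommGroup E] [Module ℝ E] {f : E → ℝ}
    (hf : IsLinearMap ℝ f) (v : E) {S : Set ℝ} (hS : Convex ℝ S) :
    Convex ℝ {z | f (z - v) ∈ S} := by
  have := (hS.is_linear_preimage hf).translate_preimage_right (-v)
  simp only [sub_eq_neg_add]
  exact this

lemma notMem_convexHull_of_forall_pos {E : Type*} [AddCommGroup E] [Module ℝ E] {f : E → ℝ}
    (hf : IsLinearMap ℝ f) {s : Set E} {v : E} (h : ∀ z ∈ s, 0 < f (z - v)) :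
    v ∉ convexHull ℝ s := fun hv => by
  have := convexHull_min h (convex_setOf_apply_sub_mem hf v (convex_Ioi 0)) hv
  have h0 : f (v - v) = 0 := by rw [sub_self, hf.map_zero]
  exact (lt_irrefl (0 : ℝ)) (h0 ▸ this)

/-- For a ray `S` of `ℝ`, a half-plane bounded by the line through `v` in direction `u`; for
`S = {0}`, that line. -/
def lineSide (u v : Pt) (S : Set ℝ) : Set Pt := {z | det2 u (z - v) ∈ S}

lemma convex_lineSide (u v : Pt) {S : Set ℝ} (hS : Convex ℝ S) : Convex ℝ (lineSide u v S) :=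
  convex_setOf_apply_sub_mem (isLinearMap_det2 u) v hS

lemma segment_subset_lineSide {u v p q : Pt} {S : Set ℝ} (hS : Convex ℝ S)
    (hp : det2 u (p - v) ∈ S) (hq : det2 u (q - v) ∈ S) : segment ℝ p q ⊆ lineSide u v S :=
  (convex_lineSide u v hS).segment_subset hp hq

lemma lineSide_Ioi_union_lineSide_Iio (u v : Pt) :
    lineSide u v (Set.Ioi 0) ∪ lineSide u v (Set.Iio 0) = lineSide u v {0}ᶜ := by
  rw [← Set.Iio_union_Ioi, Set.union_comm]
  rfl

lemma disjoint_lineSide (u v : Pt) {S T : Set ℝ} (h : Disjoint S T) :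
    Disjoint (lineSide u v S) (lineSide u v T) :=
  h.preimage _

lemma disjoint_segment_lineSide (v w : Pt) {S : Set ℝ} (hS : (0 : ℝ) ∉ S) :
    Disjoint (segment ℝ v w) (lineSide (w - v) v S) :=
  (disjoint_lineSide _ _ (Set.disjoint_singleton_left.2 hS)).mono_left
    (segment_subset_lineSide (convex_singleton 0) (by simp [det2]) (by simp [det2_self]))

lemma exists_mem_segment_det2_eq_zero {u v p q : Pt} (hp : 0 < det2 u (p - v))
    (hq : det2 u (q - v) < 0) : ∃ x ∈ segment ℝ p q, det2 u (x - v) = 0 := by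
  have hf : Continuous fun z => det2 u (z - v) :=
    (isLinearMap_det2 u).mk'.continuous_of_finiteDimensional.comp (continuous_sub_right v)
  exact (convex_segment p q).isPreconnected.intermediate_value (right_mem_segment ℝ p q)
    (left_mem_segment ℝ p q) hf.continuousOn ⟨hq.le, hp.le⟩

lemma disjoint_segment_of_det2_pos {v w a b : Pt} (hb : det2 (w - v) (b - v) < 0)
    (hab : 0 < det2 (a - v) (b - v)) : Disjoint (segment ℝ v w) (segment ℝ a b) := by
  rw [Set.disjoint_left, segment_symm ℝ a, segment_eq_image', segment_eq_image']
  rintro _ ⟨θ, ⟨hθ, -⟩, rfl⟩ ⟨β, ⟨hβ, -⟩, hz⟩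
  have key := congrArg (fun z => det2 (b - v) (z - v)) hz
  simp only [det2, PiLp.add_apply, PiLp.sub_apply, PiLp.smul_apply, smul_eq_mul] at key hb hab
  have hθ0 : θ = 0 := by nlinarith
  have hβ0 : β = 0 := by nlinarith
  subst hθ0 hβ0
  simp only [zero_smul, add_zero] at hz
  subst hz
  simp at hb

/-- The cotangent of the angle from `u` to `x`; on either side of the line `ℝ ∙ u` it orders the
vectors by that angle (see `inner_self_mul_det2`). -/
def cotAngle (u x : Pt) : ℝ := inner ℝ u x / det2 u x

lemma inner_eq_det2_mul_cotAngle {u x : Pt} (h : det2 u x ≠ 0) :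
    inner ℝ u x = det2 u x * cotAngle u x := by
  rw [cotAngle, mul_div_cancel₀ _ h]

lemma inner_self_mul_det2 {u x y : Pt} (hx : det2 u x ≠ 0) (hy : det2 u y ≠ 0) :
    inner ℝ u u * det2 x y = det2 u x * det2 u y * (cotAngle u x - cotAngle u y) := by
  simp only [cotAngle, PiLp.inner_apply, Fin.sum_univ_two, RCLike.inner_apply, conj_trivial]
  field_simp
  simp only [det2]
  ring

lemma inner_self_pos_of_det2_ne_zero {u x : Pt} (h : det2 u x ≠ 0) : 0 < inner ℝ u u :=
  real_inner_self_pos.2 (by rintro rfl; simp [det2] at h)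

lemma det2_neg_iff_cotAngle_lt {u x y : Pt} (h : 0 < det2 u x * det2 u y) :
    det2 x y < 0 ↔ cotAngle u x < cotAngle u y := by
  have hx : det2 u x ≠ 0 := left_ne_zero_of_mul h.ne'
  have hu := inner_self_pos_of_det2_ne_zero hx
  have key := inner_self_mul_det2 hx (right_ne_zero_of_mul h.ne')
  constructor <;> intro <;> nlinarith

lemma det2_pos_iff_cotAngle_lt {u x y : Pt} (h : det2 u x * det2 u y < 0) :
    0 < det2 x y ↔ cotAngle u x < cotAngle u y := by
  have hx : det2 u x ≠ 0 := left_ne_zero_of_mul h.ne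
  have hu := inner_self_pos_of_det2_ne_zero hx
  have key := inner_self_mul_det2 hx (right_ne_zero_of_mul h.ne)
  constructor <;> intro <;> nlinarith

lemma det2_neg_of_cotAngle_le {u x y : Pt} (h : 0 < det2 u x * det2 u y) (hxy : det2 x y ≠ 0)
    (hle : cotAngle u x ≤ cotAngle u y) : det2 x y < 0 := by
  refine hxy.lt_or_gt.resolve_right fun hpos => ?_
  have := (det2_neg_iff_cotAngle_lt (u := u) (mul_comm (det2 u x) _ ▸ h)).1
    (show det2 y x < 0 by rw [det2_comm]; linarith)
  linarith

lemma Finset.even_card_of_involution {α : Type*} {S : Finset α} {m : α → α}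
    (hmem : ∀ p ∈ S, m p ∈ S) (hinv : ∀ p ∈ S, m (m p) = p) (hne : ∀ p ∈ S, m p ≠ p) :
    Even S.card := by
  rw [← ZMod.natCast_eq_zero_iff_even, Finset.card_eq_sum_ones, Nat.cast_sum]
  exact Finset.sum_involution (fun p _ => m p) (fun _ _ => by decide) (fun p hp _ => hne p hp)
    hmem hinv

lemma Finset.pair_union_erase_union_erase {α : Type*} [DecidableEq α] {s t : Finset α} {a b : α}
    (ha : a ∈ s) (hb : b ∈ t) : {a, b} ∪ (s.erase a ∪ t.erase b) = s ∪ t := by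
  ext z
  simp only [mem_union, mem_insert, mem_singleton, mem_erase]
  constructor
  · rintro ((rfl | rfl) | ⟨-, h⟩ | ⟨-, h⟩) <;> simp [*]
  · tauto

def IsNCMatchingIn (S : Finset Pt) (m : Pt → Pt) (R : Set Pt) : Prop :=
  IsNCMatching S m ∧ ∀ p ∈ S, segment ℝ p (m p) ⊆ R

lemma IsNCMatching.isNCMatchingIn {S : Finset Pt} {m : Pt → Pt} {R : Set Pt}
    (hm : IsNCMatching S m) (hR : Convex ℝ R) (hSR : ∀ p ∈ S, p ∈ R) : IsNCMatchingIn S m R :=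
  ⟨hm, fun p hp => hR.segment_subset (hSR p hp) (hSR _ (hm.1 p hp))⟩

lemma IsNCMatchingIn.mono {S : Finset Pt} {m : Pt → Pt} {R R' : Set Pt}
    (hm : IsNCMatchingIn S m R) (hRR' : R ⊆ R') : IsNCMatchingIn S m R' :=
  ⟨hm.1, fun p hp => (hm.2 p hp).trans hRR'⟩

lemma isNCMatchingIn_pair {a b : Pt} (hab : a ≠ b) :
    IsNCMatchingIn {a, b} (Equiv.swap a b) (segment ℝ a b) := by
  refine ⟨⟨?_, ?_, ?_, ?_⟩, ?_⟩
  · intro p hp; rcases mem_insert.1 hp with rfl | hp <;> simp_all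
  · intro p _; simp
  · intro p hp; rcases mem_insert.1 hp with rfl | hp <;> simp_all [eq_comm]
  · intro p hp q hq hqp hqm
    simp only [mem_insert, mem_singleton] at hp hq
    rcases hp with rfl | rfl <;> rcases hq with rfl | rfl <;> simp_all
  · intro p hp
    rcases mem_insert.1 hp with rfl | hp
    · simp
    · rw [mem_singleton.1 hp, Equiv.swap_apply_right, segment_symm]

open Classical in
lemma IsNCMatchingIn.union {S T : Finset Pt} {mS mT : Pt → Pt} {R R' : Set Pt}
    (hS : IsNCMatchingIn S mS R) (hT : IsNCMatchingIn T mT R') (hR : Disjoint R R') :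
    IsNCMatchingIn (S ∪ T) (S.piecewise mS mT) (R ∪ R') := by
  obtain ⟨⟨hS₁, hS₂, hS₃, hS₄⟩, hSR⟩ := hS
  obtain ⟨⟨hT₁, hT₂, hT₃, hT₄⟩, hTR⟩ := hT
  have hST : ∀ p ∈ T, p ∉ S := fun p hpT hpS =>
    hR.ne_of_mem (hSR p hpS (left_mem_segment ℝ _ _)) (hTR p hpT (left_mem_segment ℝ _ _)) rfl
  have hmS : ∀ p ∈ S, S.piecewise mS mT p = mS p := fun p hp => piecewise_eq_of_mem _ _ _ hp
  have hmT : ∀ p ∈ T, S.piecewise mS mT p = mT p := fun p hp =>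
    piecewise_eq_of_notMem _ _ _ (hST p hp)
  have hcross : ∀ p ∈ S, ∀ q ∈ T, segment ℝ p (mS p) ∩ segment ℝ q (mT q) = ∅ :=
    fun p hp q hq => Set.disjoint_iff_inter_eq_empty.1 (hR.mono (hSR p hp) (hTR q hq))
  refine ⟨⟨?_, ?_, ?_, ?_⟩, ?_⟩
  · intro p hp
    rcases mem_union.1 hp with hp | hp
    · rw [hmS p hp]; exact mem_union_left _ (hS₁ p hp)
    · rw [hmT p hp]; exact mem_union_right _ (hT₁ p hp)
  · intro p hp
    rcases mem_union.1 hp with hp | hp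
    · rw [hmS p hp, hmS _ (hS₁ p hp), hS₂ p hp]
    · rw [hmT p hp, hmT _ (hT₁ p hp), hT₂ p hp]
  · intro p hp
    rcases mem_union.1 hp with hp | hp
    · rw [hmS p hp]; exact hS₃ p hp
    · rw [hmT p hp]; exact hT₃ p hp
  · intro p hp q hq hqp hqm
    rcases mem_union.1 hp with hp | hp <;> rcases mem_union.1 hq with hq | hq
    · rw [hmS p hp, hmS q hq] at *; exact hS₄ p hp q hq hqp hqm
    · rw [hmS p hp, hmT q hq]; exact hcross p hp q hq
    · rw [hmT p hp, hmS q hq, Set.inter_comm]; exact hcross q hq p hp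
    · rw [hmT p hp, hmT q hq] at *; exact hT₄ p hp q hq hqp hqm
  · intro p hp
    rcases mem_union.1 hp with hp | hp
    · rw [hmS p hp]; exact (hSR p hp).trans Set.subset_union_left
    · rw [hmT p hp]; exact (hTR p hp).trans Set.subset_union_right

lemma Feasible.symm {P : Finset Pt} {v w : Pt} (hv : v ∈ P) (h : Feasible P v w) :
    Feasible P w v := by
  obtain ⟨m, hm, hmv⟩ := h
  exact ⟨m, hm, hmv ▸ hm.2.1 v hv⟩

lemma feasible_of_isNCMatchingIn {P S : Finset Pt} {v w : Pt} {m : Pt → Pt} {R : Set Pt}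
    (hvw : v ≠ w) (hm : IsNCMatchingIn S m R) (hR : Disjoint (segment ℝ v w) R)
    (hP : {v, w} ∪ S = P) : Feasible P v w := by
  have hunion := (isNCMatchingIn_pair hvw).union hm hR
  rw [hP] at hunion
  exact ⟨_, hunion.1, by simp⟩

lemma exists_forall_det2_neg {c u : Pt} {S : Finset Pt} (hne : S.Nonempty)
    (hS : ∀ p ∈ S, 0 < det2 u (p - c))
    (hcol : ∀ p ∈ S, ∀ q ∈ S, p ≠ q → det2 (p - c) (q - c) ≠ 0) :
    ∃ p ∈ S, ∀ q ∈ S, q ≠ p → det2 (p - c) (q - c) < 0 := by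
  obtain ⟨p, hp, hmin⟩ := S.exists_min_image (fun q => cotAngle u (q - c)) hne
  exact ⟨p, hp, fun q hq hqp => det2_neg_of_cotAngle_le (mul_pos (hS p hp) (hS q hq))
    (hcol p hp q hq hqp.symm) (hmin q hq)⟩

/-- Sort the points by angle around `c` and match them in consecutive pairs. -/
lemma exists_isNCMatching_of_forall_det2_pos {c u : Pt} {S : Finset Pt}
    (hS : ∀ p ∈ S, 0 < det2 u (p - c))
    (hcol : ∀ p ∈ S, ∀ q ∈ S, p ≠ q → det2 (p - c) (q - c) ≠ 0) (heven : Even S.card) :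
    ∃ m, IsNCMatching S m := by
  obtain ⟨k, hk⟩ := heven
  induction k generalizing S with
  | zero =>
    obtain rfl : S = ∅ := card_eq_zero.1 hk
    exact ⟨id, by simp [IsNCMatching]⟩
  | succ k ih =>
    obtain ⟨p, hp, hpS⟩ := exists_forall_det2_neg (card_pos.1 (by omega)) hS hcol
    have hS₁ : ∀ z ∈ S.erase p, z ∈ S := fun z => mem_of_mem_erase
    obtain ⟨q, hq, hqS⟩ := exists_forall_det2_neg (card_pos.1 (by rw [card_erase_of_mem hp]; omega))
      (fun z hz => hS z (hS₁ z hz)) (fun z hz z' hz' => hcol z (hS₁ z hz) z' (hS₁ z' hz'))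
    have hS₂ : ∀ z ∈ (S.erase p).erase q, z ∈ S.erase p := fun z => mem_of_mem_erase
    obtain ⟨m, hm⟩ := ih (S := (S.erase p).erase q) (fun z hz => hS z (hS₁ z (hS₂ z hz)))
      (fun z hz z' hz' => hcol z (hS₁ z (hS₂ z hz)) z' (hS₁ z' (hS₂ z' hz')))
      (by rw [card_erase_of_mem hq, card_erase_of_mem hp]; omega)
    have hqp : q ≠ p := ne_of_mem_erase hq
    -- the line through `c` and `q` separates the edge `pq` from the remaining points
    have hpair : segment ℝ p q ⊆ lineSide (q - c) c (Set.Ici 0) :=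
      segment_subset_lineSide (convex_Ici 0)
        (by rw [Set.mem_Ici, det2_comm]; linarith [hpS q (hS₁ q hq) hqp]) (by simp [det2_self])
    have hrest := hm.isNCMatchingIn (convex_lineSide (q - c) c (convex_Iio 0))
      fun z hz => hqS z (hS₂ z hz) (ne_of_mem_erase hz)
    have hunion := (isNCMatchingIn_pair hqp.symm).union hrest
      ((disjoint_lineSide _ _ (Set.Iio_disjoint_Ici le_rfl).symm).mono_left hpair)
    rw [insert_union, singleton_union, insert_erase hq, insert_erase hp] at hunion
    exact ⟨_, hunion.1⟩

def leftSide (P : Finset Pt) (v w : Pt) : Finset Pt := {p ∈ P | 0 < det2 (w - v) (p - v)}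

def rightSide (P : Finset Pt) (v w : Pt) : Finset Pt := {p ∈ P | det2 (w - v) (p - v) < 0}

section Sides

variable {P : Finset Pt} {v w : Pt}

lemma mem_leftSide {p : Pt} : p ∈ leftSide P v w ↔ p ∈ P ∧ 0 < det2 (w - v) (p - v) :=
  mem_filter

lemma mem_rightSide {p : Pt} : p ∈ rightSide P v w ↔ p ∈ P ∧ det2 (w - v) (p - v) < 0 :=
  mem_filter

lemma leftSide_subset : leftSide P v w ⊆ P := filter_subset _ _

lemma rightSide_subset : rightSide P v w ⊆ P := filter_subset _ _

lemma ne_of_mem_leftSide {p : Pt} (hp : p ∈ leftSide P v w) : p ≠ v ∧ p ≠ w := by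
  have h := (mem_leftSide.1 hp).2.ne'
  exact ⟨ne_of_det2_sub_ne_zero h, by rintro rfl; exact h (det2_self _)⟩

lemma ne_of_mem_rightSide {p : Pt} (hp : p ∈ rightSide P v w) : p ≠ v ∧ p ≠ w := by
  have h := (mem_rightSide.1 hp).2.ne
  exact ⟨ne_of_det2_sub_ne_zero h, by rintro rfl; exact h (det2_self _)⟩

variable (hgp : GenPos P) (hv : v ∈ P)
include hgp hv

lemma mem_sides_of_ne (hw : w ∈ P) (hvw : v ≠ w) {p : Pt} (hp : p ∈ P) (hpv : p ≠ v)
    (hpw : p ≠ w) : p ∈ leftSide P v w ∨ p ∈ rightSide P v w := by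
  rcases (hgp.det2_ne_zero hv hw hp hvw (Ne.symm hpv) (Ne.symm hpw)).lt_or_gt with h | h
  · exact .inr (mem_rightSide.2 ⟨hp, h⟩)
  · exact .inl (mem_leftSide.2 ⟨hp, h⟩)

lemma pair_union_sides (hw : w ∈ P) (hvw : v ≠ w) :
    {v, w} ∪ (leftSide P v w ∪ rightSide P v w) = P := by
  refine subset_antisymm (union_subset (by simp [insert_subset_iff, hv, hw])
    (union_subset leftSide_subset rightSide_subset)) fun p hp => ?_
  by_cases hpv : p = v
  · simp [hpv]
  by_cases hpw : p = w
  · simp [hpw]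
  exact mem_union_right _ ((mem_union).2 (mem_sides_of_ne hgp hv hw hvw hp hpv hpw))

lemma card_sides (hw : w ∈ P) (hvw : v ≠ w) :
    (leftSide P v w).card + (rightSide P v w).card + 2 = P.card := by
  have hLR : Disjoint (leftSide P v w) (rightSide P v w) := disjoint_left.2 fun p hL hR =>
    (mem_leftSide.1 hL).2.not_gt (mem_rightSide.1 hR).2
  have hvw' : Disjoint ({v, w} : Finset Pt) (leftSide P v w ∪ rightSide P v w) := by
    refine disjoint_left.2 fun p hp hLR => ?_
    have := (mem_union.1 hLR).elim ne_of_mem_leftSide ne_of_mem_rightSide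
    simp only [mem_insert, mem_singleton] at hp
    tauto
  have h := congrArg card (pair_union_sides hgp hv hw hvw)
  rw [card_union_of_disjoint hvw', card_union_of_disjoint hLR, card_pair hvw] at h
  omega

lemma exists_isNCMatching_of_subset_leftSide {S : Finset Pt} (hS : S ⊆ leftSide P v w)
    (heven : Even S.card) : ∃ m, IsNCMatching S m :=
  exists_isNCMatching_of_forall_det2_pos (fun _ hp => (mem_leftSide.1 (hS hp)).2)
    (fun _ hp _ hq hpq => hgp.det2_ne_zero hv (leftSide_subset (hS hp)) (leftSide_subset (hS hq))
      (ne_of_mem_leftSide (hS hp)).1.symm (ne_of_mem_leftSide (hS hq)).1.symm hpq) heven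

lemma exists_isNCMatching_of_subset_rightSide {S : Finset Pt} (hS : S ⊆ rightSide P v w)
    (heven : Even S.card) : ∃ m, IsNCMatching S m :=
  exists_isNCMatching_of_forall_det2_pos (u := v - w)
    (fun _ hp => by rw [← neg_sub, det2_neg_left, neg_pos]; exact (mem_rightSide.1 (hS hp)).2)
    (fun _ hp _ hq hpq => hgp.det2_ne_zero hv (rightSide_subset (hS hp)) (rightSide_subset (hS hq))
      (ne_of_mem_rightSide (hS hp)).1.symm (ne_of_mem_rightSide (hS hq)).1.symm hpq) heven

lemma exists_isNCMatchingIn_sides_of_even (hL : Even (leftSide P v w).card)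
    (hR : Even (rightSide P v w).card) :
    ∃ m, IsNCMatchingIn (leftSide P v w ∪ rightSide P v w) m (lineSide (w - v) v {0}ᶜ) := by
  obtain ⟨mL, hmL⟩ := exists_isNCMatching_of_subset_leftSide hgp hv subset_rfl hL
  obtain ⟨mR, hmR⟩ := exists_isNCMatching_of_subset_rightSide hgp hv subset_rfl hR
  have hmL' := hmL.isNCMatchingIn (convex_lineSide (w - v) v (convex_Ioi 0))
    fun _ hp => (mem_leftSide.1 hp).2
  have hmR' := hmR.isNCMatchingIn (convex_lineSide (w - v) v (convex_Iio 0))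
    fun _ hp => (mem_rightSide.1 hp).2
  exact ⟨_, (hmL'.union hmR' (disjoint_lineSide _ _ Set.Ioi_disjoint_Iio_same)).mono
    (lineSide_Ioi_union_lineSide_Iio _ _).le⟩

lemma exists_isNCMatchingIn_sides_of_crossing_pair {a b : Pt} (ha : a ∈ leftSide P v w)
    (hb : b ∈ rightSide P v w) (hab : 0 < det2 (a - v) (b - v))
    (haL : ∀ z ∈ leftSide P v w, z ≠ a → det2 (a - v) (z - v) < 0)
    (hbR : ∀ z ∈ rightSide P v w, z ≠ b → 0 < det2 (b - v) (z - v))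
    (hL : Even ((leftSide P v w).erase a).card) (hR : Even ((rightSide P v w).erase b).card) :
    ∃ m, IsNCMatchingIn (leftSide P v w ∪ rightSide P v w) m
      (segment ℝ a b ∪ lineSide (w - v) v {0}ᶜ) := by
  obtain ⟨mL, hmL⟩ := exists_isNCMatching_of_subset_leftSide hgp hv (erase_subset a _) hL
  obtain ⟨mR, hmR⟩ := exists_isNCMatching_of_subset_rightSide hgp hv (erase_subset b _) hR
  -- the edge `ab` is separated from the other points of each side by the line through `v` and
  -- its endpoint on that side
  have hmL' := hmL.isNCMatchingIn ((convex_lineSide (w - v) v (convex_Ioi 0)).inter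
      (convex_lineSide (a - v) v (convex_Iio 0)))
    fun z hz => ⟨(mem_leftSide.1 (mem_of_mem_erase hz)).2,
      haL z (mem_of_mem_erase hz) (ne_of_mem_erase hz)⟩
  have hmR' := hmR.isNCMatchingIn ((convex_lineSide (w - v) v (convex_Iio 0)).inter
      (convex_lineSide (b - v) v (convex_Ioi 0)))
    fun z hz => ⟨(mem_rightSide.1 (mem_of_mem_erase hz)).2,
      hbR z (mem_of_mem_erase hz) (ne_of_mem_erase hz)⟩
  have hseg_a : segment ℝ a b ⊆ lineSide (a - v) v (Set.Ici 0) :=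
    segment_subset_lineSide (convex_Ici 0) (by simp [det2_self]) hab.le
  have hseg_b : segment ℝ a b ⊆ lineSide (b - v) v (Set.Iic 0) :=
    segment_subset_lineSide (convex_Iic 0) (by rw [Set.mem_Iic, det2_comm]; linarith)
      (by simp [det2_self])
  have hab_ne : a ≠ b := by rintro rfl; linarith [(mem_leftSide.1 ha).2, (mem_rightSide.1 hb).2]
  have hall := (isNCMatchingIn_pair hab_ne).union
    (hmL'.union hmR' ((disjoint_lineSide _ _ Set.Ioi_disjoint_Iio_same).mono
      Set.inter_subset_left Set.inter_subset_left))
    (Set.disjoint_union_right.2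
      ⟨(disjoint_lineSide _ _ (Set.Iio_disjoint_Ici le_rfl).symm).mono hseg_a
          Set.inter_subset_right,
        (disjoint_lineSide _ _ (Set.Iic_disjoint_Ioi le_rfl)).mono hseg_b
          Set.inter_subset_right⟩)
  rw [pair_union_erase_union_erase ha hb] at hall
  exact ⟨_, hall.mono (Set.union_subset_union_right _
    ((Set.union_subset_union Set.inter_subset_left Set.inter_subset_left).trans
      (lineSide_Ioi_union_lineSide_Iio _ _).le))⟩

lemma notMem_convexHull_of_cotAngle_separated (hw : w ∈ P) (hvw : v ≠ w) {t : ℝ}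
    (hL : ∀ z ∈ leftSide P v w, t < cotAngle (w - v) (z - v))
    (hR : ∀ z ∈ rightSide P v w, cotAngle (w - v) (z - v) < t) :
    v ∉ convexHull ℝ ((P : Set Pt) \ {v}) := by
  have hlin : IsLinearMap ℝ fun x => inner ℝ (w - v) x - t * det2 (w - v) x :=
    ⟨fun x y => by rw [inner_add_right, (isLinearMap_det2 _).map_add]; ring,
     fun c x => by rw [real_inner_smul_right, (isLinearMap_det2 _).map_smul, smul_eq_mul]; ring⟩
  refine notMem_convexHull_of_forall_pos hlin fun z ⟨hz, hzv⟩ => ?_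
  rcases eq_or_ne z w with rfl | hzw
  · simpa [det2_self] using pow_pos (norm_pos_iff.2 (sub_ne_zero.2 hzv)) 2
  rcases mem_sides_of_ne hgp hv hw hvw hz hzv hzw with hzL | hzR
  · have hy := (mem_leftSide.1 hzL).2
    simp only [inner_eq_det2_mul_cotAngle hy.ne']
    nlinarith [hL z hzL]
  · have hy := (mem_rightSide.1 hzR).2
    simp only [inner_eq_det2_mul_cotAngle hy.ne]
    nlinarith [hR z hzR]

/-- `a` and `b` are the points of the two sides angularly closest to the ray from `v` away from `w`;
when `v` is not a hull vertex, the edge `ab` crosses that ray. -/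
lemma exists_crossing_pair (hw : w ∈ P) (hvw : v ≠ w)
    (hhull : v ∈ convexHull ℝ ((P : Set Pt) \ {v})) (hL : (leftSide P v w).Nonempty)
    (hR : (rightSide P v w).Nonempty) :
    ∃ a ∈ leftSide P v w, ∃ b ∈ rightSide P v w, 0 < det2 (a - v) (b - v) ∧
      (∀ z ∈ leftSide P v w, z ≠ a → det2 (a - v) (z - v) < 0) ∧
      (∀ z ∈ rightSide P v w, z ≠ b → 0 < det2 (b - v) (z - v)) := by
  set κ : Pt → ℝ := fun z => cotAngle (w - v) (z - v)
  obtain ⟨a, ha, hamin⟩ := (leftSide P v w).exists_min_image κ hL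
  obtain ⟨b, hb, hbmax⟩ := (rightSide P v w).exists_max_image κ hR
  have hya := (mem_leftSide.1 ha).2
  have hyb := (mem_rightSide.1 hb).2
  have hcol : ∀ p ∈ P, ∀ q ∈ P, p ≠ v → q ≠ v → p ≠ q → det2 (p - v) (q - v) ≠ 0 :=
    fun p hp q hq hpv hqv => hgp.det2_ne_zero hv hp hq (Ne.symm hpv) (Ne.symm hqv)
  have hκ : κ a < κ b := by
    by_contra hba
    have hab : det2 (a - v) (b - v) < 0 :=
      (not_lt.1 (mt (det2_pos_iff_cotAngle_lt (mul_neg_of_pos_of_neg hya hyb)).1 hba)).lt_of_ne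
        (hcol a (leftSide_subset ha) b (rightSide_subset hb) (ne_of_mem_leftSide ha).1
          (ne_of_mem_rightSide hb).1 (by rintro rfl; linarith))
    have hκba : κ b < κ a := (det2_pos_iff_cotAngle_lt (mul_neg_of_neg_of_pos hyb hya)).1
      (by rw [det2_comm]; linarith)
    exact notMem_convexHull_of_cotAngle_separated hgp hv hw hvw (t := (κ a + κ b) / 2)
      (fun z hz => by linarith [hamin z hz]) (fun z hz => by linarith [hbmax z hz]) hhull
  refine ⟨a, ha, b, hb, (det2_pos_iff_cotAngle_lt (mul_neg_of_pos_of_neg hya hyb)).2 hκ,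
    fun z hz hza => ?_, fun z hz hzb => ?_⟩
  · exact det2_neg_of_cotAngle_le (mul_pos hya (mem_leftSide.1 hz).2)
      (hcol a (leftSide_subset ha) z (leftSide_subset hz) (ne_of_mem_leftSide ha).1
        (ne_of_mem_leftSide hz).1 (Ne.symm hza)) (hamin z hz)
  · rw [det2_comm, neg_pos]
    exact det2_neg_of_cotAngle_le (mul_pos_of_neg_of_neg (mem_rightSide.1 hz).2 hyb)
      (hcol z (rightSide_subset hz) b (rightSide_subset hb) (ne_of_mem_rightSide hz).1
        (ne_of_mem_rightSide hb).1 hzb) (hbmax z hz)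

end Sides

section Feasible

variable {P : Finset Pt} {v w : Pt} (hgp : GenPos P) (hv : v ∈ P) (hw : w ∈ P) (hvw : v ≠ w)
include hgp hv hw hvw

lemma even_card_leftSide_iff (hP : Even P.card) :
    Even (leftSide P v w).card ↔ Even (rightSide P v w).card := by
  rw [← card_sides hgp hv hw hvw, Nat.even_add, Nat.even_add] at hP
  simpa using hP

lemma feasible_of_even_card_leftSide (hP : Even P.card) (hL : Even (leftSide P v w).card) :
    Feasible P v w := by
  obtain ⟨m, hm⟩ := exists_isNCMatchingIn_sides_of_even hgp hv hL
    ((even_card_leftSide_iff hgp hv hw hvw hP).1 hL)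
  exact feasible_of_isNCMatchingIn hvw hm (disjoint_segment_lineSide v w (by simp))
    (pair_union_sides hgp hv hw hvw)

lemma feasible_of_odd_card_leftSide_of_mem_convexHull (hP : Even P.card)
    (hL : Odd (leftSide P v w).card) (hhull : v ∈ convexHull ℝ ((P : Set Pt) \ {v})) :
    Feasible P v w := by
  have hR : Odd (rightSide P v w).card := by
    rw [← Nat.not_even_iff_odd, ← even_card_leftSide_iff hgp hv hw hvw hP]
    exact Nat.not_even_iff_odd.2 hL
  obtain ⟨a, ha, b, hb, hab, haL, hbR⟩ :=
    exists_crossing_pair hgp hv hw hvw hhull (card_pos.1 hL.pos) (card_pos.1 hR.pos)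
  obtain ⟨m, hm⟩ := exists_isNCMatchingIn_sides_of_crossing_pair hgp hv ha hb hab haL hbR
    (by rw [card_erase_of_mem ha]; exact Nat.Odd.sub_odd hL odd_one)
    (by rw [card_erase_of_mem hb]; exact Nat.Odd.sub_odd hR odd_one)
  exact feasible_of_isNCMatchingIn hvw hm (Set.disjoint_union_right.2
      ⟨disjoint_segment_of_det2_pos (mem_rightSide.1 hb).2 hab,
        disjoint_segment_lineSide v w (by simp)⟩)
    (pair_union_sides hgp hv hw hvw)

lemma feasible_of_mem_convexHull (hP : Even P.card)
    (hhull : v ∈ convexHull ℝ ((P : Set Pt) \ {v})) : Feasible P v w := by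
  rcases Nat.even_or_odd (leftSide P v w).card with hL | hL
  · exact feasible_of_even_card_leftSide hgp hv hw hvw hP hL
  · exact feasible_of_odd_card_leftSide_of_mem_convexHull hgp hv hw hvw hP hL hhull

/-- In a matching containing the edge `vw` between two hull vertices, an edge leaving the left side
would cross the line `vw` either on the segment `vw` or beyond `v` or `w`, putting `v` or `w` inside
the hull of the other points. -/
lemma IsNCMatching.apply_mem_leftSide {m : Pt → Pt} (hm : IsNCMatching P m) (hmv : m v = w)
    (hvh : v ∉ convexHull ℝ ((P : Set Pt) \ {v})) (hwh : w ∉ convexHull ℝ ((P : Set Pt) \ {w}))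
    {p : Pt} (hp : p ∈ leftSide P v w) : m p ∈ leftSide P v w := by
  obtain ⟨hmem, hinv, -, hnc⟩ := hm
  have hpP := leftSide_subset hp
  obtain ⟨hpv, hpw⟩ := ne_of_mem_leftSide hp
  have hqv : m p ≠ v := fun h => hpw (by rw [← hinv p hpP, h, hmv])
  have hqw : m p ≠ w := fun h => hpv (by rw [← hinv p hpP, h, ← hmv, hinv v hv])
  refine (mem_sides_of_ne hgp hv hw hvw (hmem p hpP) hqv hqw).resolve_right fun hq => ?_
  obtain ⟨x, hx, hx0⟩ :=
    exists_mem_segment_det2_eq_zero (mem_leftSide.1 hp).2 (mem_rightSide.1 hq).2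
  have hxvw : x ∉ segment ℝ v w := fun h => by
    have hdisj := hnc v hv p hpP hpv (hmv ▸ hpw)
    rw [hmv] at hdisj
    exact hdisj.subset ⟨h, hx⟩
  have hxhull : ∀ y ∈ ({v, w} : Set Pt), x ∈ convexHull ℝ ((P : Set Pt) \ {y}) := by
    rintro y (rfl | rfl)
    · exact segment_subset_convexHull (Set.mem_sdiff_singleton.2 ⟨hpP, hpv⟩)
        (Set.mem_sdiff_singleton.2 ⟨hmem p hpP, hqv⟩) hx
    · exact segment_subset_convexHull (Set.mem_sdiff_singleton.2 ⟨hpP, hpw⟩)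
        (Set.mem_sdiff_singleton.2 ⟨hmem p hpP, hqw⟩) hx
  rcases (collinear_of_det2_eq_zero hx0).wbtw_or_wbtw_or_wbtw with h | h | h
  · exact hwh ((convex_convexHull ℝ _).mem_of_wbtw h (subset_convexHull ℝ _ ⟨hv, hvw⟩)
      (hxhull w (by simp)))
  · exact hxvw (segment_symm ℝ v w ▸ h.mem_segment)
  · exact hvh ((convex_convexHull ℝ _).mem_of_wbtw h (hxhull v (by simp))
      (subset_convexHull ℝ _ ⟨hw, hvw.symm⟩))

lemma not_feasible_of_odd_card_leftSide (hvh : v ∉ convexHull ℝ ((P : Set Pt) \ {v}))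
    (hwh : w ∉ convexHull ℝ ((P : Set Pt) \ {w})) (hL : Odd (leftSide P v w).card) :
    ¬ Feasible P v w := by
  rintro ⟨m, hm, hmv⟩
  refine Nat.not_even_iff_odd.2 hL (even_card_of_involution
    (fun p hp => hm.apply_mem_leftSide hgp hv hw hvw hmv hvh hwh hp) (fun p hp => ?_)
    (fun p hp => ?_))
  · exact hm.2.1 p (leftSide_subset hp)
  · exact hm.2.2.1 p (leftSide_subset hp)

end Feasible

/-- For a set `P` of `2n` points in general position, an edge `{v,w}` is
infeasible iff both `v` and `w` are vertices of the convex hull of `P` and the number of points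
of `P` strictly on each open side of the line through `v` and `w` is odd. -/
theorem infeasible_iff_hull_and_odd_sides (n : ℕ) (P : Finset Pt) (hcard : P.card = 2 * n)
    (hgp : GenPos P) (v w : Pt) (hv : v ∈ P) (hw : w ∈ P) (hvw : v ≠ w) :
    ¬ Feasible P v w ↔
      ((v ∉ convexHull ℝ ((P : Set Pt) \ {v}) ∧
        w ∉ convexHull ℝ ((P : Set Pt) \ {w})) ∧
       (Odd {p ∈ (P : Set Pt) | 0 < det2 (w - v) (p - v)}.ncard ∧
        Odd {p ∈ (P : Set Pt) | det2 (w - v) (p - v) < 0}.ncard)) := by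
  have hP : Even P.card := ⟨n, by omega⟩
  have hL : {p ∈ (P : Set Pt) | 0 < det2 (w - v) (p - v)}.ncard = (leftSide P v w).card := by
    rw [← Set.ncard_coe_finset, leftSide, coe_filter]; rfl
  have hR : {p ∈ (P : Set Pt) | det2 (w - v) (p - v) < 0}.ncard = (rightSide P v w).card := by
    rw [← Set.ncard_coe_finset, rightSide, coe_filter]; rfl
  rw [hL, hR, ← Nat.not_even_iff_odd, ← Nat.not_even_iff_odd,
    ← even_card_leftSide_iff hgp hv hw hvw hP, and_self]
  constructor
  · intro hinf
    exact ⟨⟨fun h => hinf (feasible_of_mem_convexHull hgp hv hw hvw hP h),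
      fun h => hinf ((feasible_of_mem_convexHull hgp hw hv hvw.symm hP h).symm hw)⟩,
      fun h => hinf (feasible_of_even_card_leftSide hgp hv hw hvw hP h)⟩
  · rintro ⟨⟨hvh, hwh⟩, hL⟩
    exact not_feasible_of_odd_card_leftSide hgp hv hw hvw hvh hwh (Nat.not_even_iff_odd.1 hL)
end
end

section
/- Let P be a set of 2n distinct points in the Euclidean plane in general position. If {v,w} is a feasible edge whose length dist(v,w) is maximal among all feasible edges of P, then at least one of v, w is a vertex of the convex hull of P. -/
/-!
Suppose neither `v` nor `w` is a hull vertex. A hull vertex `p` maximizing `⟪·, v - w⟫` satisfies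
`dist p w > dist v w`, so it suffices that an edge `pz` from a hull vertex `p` to a non-vertex `z`
is always feasible. Separate `p` from the other points by a line and sort them by angle around `p`;
the angular coordinate is a ratio of affine functions, hence quasilinear beyond that line. If both
sides of the line `pz` hold an even number of points, repeatedly match the two angularly outermost
points of one side: their segment lies in a sector that all later segments avoid. If both sides are
odd, first match the pair `a, b` (one on each side) whose line crosses the ray from `p` through `z`
farthest out: all other points, `z` included because it is not a hull vertex, lie strictly on `p`'s
side of the line `ab`, and both sides of `pz` become even.
-/

noncomputable section

open Finset

def orient (a b : Pt) : Pt →ᵃ[ℝ] ℝ where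
  toFun c := (b 0 - a 0) * (c 1 - a 1) - (b 1 - a 1) * (c 0 - a 0)
  linear := ((b 0 - a 0) • EuclideanSpace.proj 1 - (b 1 - a 1) • EuclideanSpace.proj 0 :
    Pt →L[ℝ] ℝ)
  map_vadd' c v := by simp; ring

lemma orient_apply (a b c : Pt) :
    orient a b c = (b 0 - a 0) * (c 1 - a 1) - (b 1 - a 1) * (c 0 - a 0) := rfl

@[simp]
lemma orient_apply_left (a b : Pt) : orient a b a = 0 := by simp [orient_apply]

@[simp]
lemma orient_apply_right (a b : Pt) : orient a b b = 0 := by rw [orient_apply]; ring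

lemma orient_smul_sub_orient_smul (p z x y : Pt) :
    orient p z x • (y - p) - orient p z y • (x - p) = -orient p x y • (z - p) := by
  ext i; fin_cases i <;> simp [orient_apply] <;> ring

lemma collinear_of_orient_eq_zero {a b c : Pt} (hab : a ≠ b) (h : orient a b c = 0) :
    Collinear ℝ ({a, b, c} : Set Pt) := by
  have hn : (b 0 - a 0) ^ 2 + (b 1 - a 1) ^ 2 ≠ 0 := fun h0 => hab <| by
    ext i; fin_cases i <;> simp <;> nlinarith [sq_nonneg (b 0 - a 0), sq_nonneg (b 1 - a 1)]
  set t := ((c 0 - a 0) * (b 0 - a 0) + (c 1 - a 1) * (b 1 - a 1)) /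
    ((b 0 - a 0) ^ 2 + (b 1 - a 1) ^ 2)
  rw [collinear_iff_of_mem (Set.mem_insert a _)]
  refine ⟨b -ᵥ a, ?_⟩
  simp only [Set.mem_insert_iff, Set.mem_singleton_iff, forall_eq_or_imp, forall_eq]
  refine ⟨⟨0, by simp⟩, ⟨1, by simp⟩, ⟨t, ?_⟩⟩
  rw [orient_apply] at h
  ext i; fin_cases i <;> simp [t] <;> field_simp
  · linear_combination (-(b 1 - a 1)) * h
  · linear_combination (b 0 - a 0) * h

lemma GenPos.mono {P Q : Finset Pt} (hP : GenPos P) (hQP : Q ⊆ P) : GenPos Q :=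
  fun a ha b hb c hc => hP a (hQP ha) b (hQP hb) c (hQP hc)

lemma GenPos.orient_ne_zero {P : Finset Pt} (hP : GenPos P) {a b c : Pt} (ha : a ∈ P)
    (hb : b ∈ P) (hc : c ∈ P) (hab : a ≠ b) (hac : a ≠ c) (hbc : b ≠ c) : orient a b c ≠ 0 :=
  fun h => hP a ha b hb c hc hab hac hbc (collinear_of_orient_eq_zero hab h)

lemma orient_eq_zero_of_mem_segment {a b ξ : Pt} (h : ξ ∈ segment ℝ a b) : orient a b ξ = 0 :=
  ((convex_singleton 0).affine_preimage (orient a b)).segment_subset (orient_apply_left a b)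
    (orient_apply_right a b) h

lemma segment_inter_segment_eq_empty_of_orient_neg {a b x y : Pt} (hx : orient a b x < 0)
    (hy : orient a b y < 0) : segment ℝ a b ∩ segment ℝ x y = ∅ := by
  have hneg : segment ℝ x y ⊆ orient a b ⁻¹' Set.Iio 0 :=
    ((convex_Iio 0).affine_preimage _).segment_subset hx hy
  exact Set.eq_empty_of_forall_notMem fun ξ ⟨h₁, h₂⟩ =>
    (hneg h₂).ne (orient_eq_zero_of_mem_segment h₁)

def addEdge (m : Pt → Pt) (a b : Pt) (x : Pt) : Pt :=
  if x = a then b else if x = b then a else m x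

lemma addEdge_apply_left (m : Pt → Pt) (a b : Pt) : addEdge m a b a = b := if_pos rfl

lemma addEdge_apply_of_ne (m : Pt → Pt) {a b x : Pt} (ha : x ≠ a) (hb : x ≠ b) :
    addEdge m a b x = m x := by
  simp [addEdge, ha, hb]

lemma isNCMatching_empty : IsNCMatching ∅ id := by simp [IsNCMatching]

lemma IsNCMatching.addEdge {S : Finset Pt} {m : Pt → Pt} (hm : IsNCMatching S m) {a b : Pt}
    (ha : a ∉ S) (hb : b ∉ S) (hab : a ≠ b)
    (hdisj : ∀ q ∈ S, segment ℝ a b ∩ segment ℝ q (m q) = ∅) :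
    IsNCMatching (insert a (insert b S)) (addEdge m a b) := by
  obtain ⟨hmem, hinv, hfix, hnc⟩ := hm
  have hm_ne {q} (hq : q ∈ S) : m q ≠ a ∧ m q ≠ b :=
    ⟨fun h => ha (h ▸ hmem q hq), fun h => hb (h ▸ hmem q hq)⟩
  have hS_ne {q} (hq : q ∈ S) : q ≠ a ∧ q ≠ b := ⟨fun h => ha (h ▸ hq), fun h => hb (h ▸ hq)⟩
  have hba := hab.symm
  refine ⟨?_, ?_, ?_, ?_⟩
  · intro x hx
    rcases mem_insert.mp hx with rfl | hx
    · simp [_root_.addEdge]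
    rcases mem_insert.mp hx with rfl | hx <;> simp_all [_root_.addEdge]
  · intro x hx
    rcases mem_insert.mp hx with rfl | hx
    · simp_all [_root_.addEdge]
    rcases mem_insert.mp hx with rfl | hx <;> simp_all [_root_.addEdge]
  · intro x hx
    rcases mem_insert.mp hx with rfl | hx
    · simp_all [_root_.addEdge]
    rcases mem_insert.mp hx with rfl | hx <;> simp_all [_root_.addEdge]
  · have hdisj_ba : ∀ q ∈ S, segment ℝ b a ∩ segment ℝ q (m q) = ∅ := by
      simpa only [segment_symm ℝ a b] using hdisj
    have hdisj_comm : ∀ q ∈ S, segment ℝ q (m q) ∩ segment ℝ a b = ∅ := by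
      simpa only [Set.inter_comm] using hdisj
    have hdisj_ba_comm : ∀ q ∈ S, segment ℝ q (m q) ∩ segment ℝ b a = ∅ := by
      simpa only [Set.inter_comm] using hdisj_ba
    intro x hx y hy hyx hym
    simp only [mem_insert] at hx hy
    rcases hx with rfl | rfl | hx <;> rcases hy with rfl | rfl | hy <;>
      simp_all [_root_.addEdge]

lemma exists_isNCMatching_pair {p z : Pt} (hpz : p ≠ z) :
    ∃ m, IsNCMatching {p, z} m ∧ m p = z := by
  refine ⟨addEdge id p z, ?_, addEdge_apply_left _ _ _⟩
  simpa using isNCMatching_empty.addEdge (notMem_empty p) (notMem_empty z) hpz (by simp)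

lemma quasiconvexOn_div {E : Type*} [AddCommGroup E] [Module ℝ E] {s : Set E}
    (hs : Convex ℝ s) (f g : E →ᵃ[ℝ] ℝ) (hg : ∀ x ∈ s, 0 < g x) :
    QuasiconvexOn ℝ s (fun x => f x / g x) := by
  intro r
  have : {x ∈ s | f x / g x ≤ r} = s ∩ (f - r • g) ⁻¹' Set.Iic 0 := by
    ext x
    simp only [Set.mem_sep_iff, Set.mem_inter_iff, Set.mem_preimage, Set.mem_Iic,
      AffineMap.coe_sub, AffineMap.coe_smul, Pi.sub_apply, Pi.smul_apply, smul_eq_mul,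
      sub_nonpos]
    exact and_congr_right fun hx => div_le_iff₀ (hg x hx)
  rw [this]
  exact hs.inter ((convex_Iic 0).affine_preimage _)

lemma quasilinearOn_div {E : Type*} [AddCommGroup E] [Module ℝ E] {s : Set E}
    (hs : Convex ℝ s) (f g : E →ᵃ[ℝ] ℝ) (hg : ∀ x ∈ s, 0 < g x) :
    QuasilinearOn ℝ s (fun x => f x / g x) := by
  refine ⟨quasiconvexOn_div hs f g hg, ?_⟩
  simpa [Function.comp_def, neg_div] using
    (quasiconvexOn_div hs (-f) g hg).antitone_comp fun _ _ => neg_le_neg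

lemma Finset.exists_top_two {α β : Type*} [LinearOrder β] {s : Finset α} (f : α → β)
    (hf : Set.InjOn f s) (hs : 1 < #s) :
    ∃ a ∈ s, ∃ b ∈ s, a ≠ b ∧ f b < f a ∧ ∀ x ∈ s, x ≠ a → x ≠ b → f x < f b := by
  classical
  obtain ⟨a, ha, hamax⟩ := s.exists_max_image f (card_pos.mp (by omega))
  obtain ⟨b, hb, hbmax⟩ := (s.erase a).exists_max_image f
    (card_pos.mp (by rw [card_erase_of_mem ha]; omega))
  obtain ⟨hba, hbs⟩ := mem_erase.mp hb
  have hlt {x y} (hx : x ∈ s) (hy : y ∈ s) (hxy : x ≠ y) (hle : f x ≤ f y) : f x < f y :=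
    hle.lt_of_ne fun h => hxy (hf hx hy h)
  refine ⟨a, ha, b, hbs, hba.symm, hlt hbs ha hba (hamax b hbs), fun x hx hxa hxb => ?_⟩
  exact hlt hx hbs hxb (hbmax x (mem_erase.mpr ⟨hxa, hx⟩))

lemma Finset.even_card_filter_erase_iff {α : Type*} [DecidableEq α] {s : Finset α} {a : α}
    (ha : a ∈ s) (P : α → Prop) [DecidablePred P] :
    Even #{x ∈ s.erase a | P x} ↔ (Even #{x ∈ s | P x} ↔ ¬P a) := by
  rw [filter_erase]
  by_cases hPa : P a
  · have haP : a ∈ {x ∈ s | P x} := mem_filter.mpr ⟨ha, hPa⟩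
    have := card_pos.mpr ⟨a, haP⟩
    rw [card_erase_of_mem haP]
    simp only [hPa, not_true_eq_false, iff_false, Nat.even_iff]
    omega
  · rw [erase_eq_of_notMem fun h => hPa (mem_filter.mp h).2]
    simp [hPa]

section Sweep

variable {H : Set Pt} {σ : Pt → ℝ} {p z : Pt}

lemma IsNCMatching.segment_subset_lt (hσ : QuasiconvexOn ℝ H σ)
    (hpz : ∀ ξ ∈ segment ℝ p z, σ ξ = σ z) {T : Finset Pt} (hTH : ↑T ⊆ H)
    {m : Pt → Pt} (hm : IsNCMatching (insert p T) m) (hmp : m p = z) {L : ℝ}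
    (hL : ∀ x ∈ T, σ x < L) : ∀ q ∈ insert p T, segment ℝ q (m q) ⊆ {x | σ x < L} := by
  obtain ⟨hmem, hinv, hfix, -⟩ := hm
  have hzT : z ∈ T := by
    have := hmem p (mem_insert_self p T)
    rw [hmp, mem_insert] at this
    exact this.resolve_left (hmp ▸ hfix p (mem_insert_self p T))
  have hpz_lt : segment ℝ p z ⊆ {x | σ x < L} := fun ξ hξ => (hpz ξ hξ).trans_lt (hL z hzT)
  intro q hq
  by_cases hqp : q = p
  · rwa [hqp, hmp]
  by_cases hmqp : m q = p
  · have hqz : q = z := by rw [← hinv q hq, hmqp, hmp]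
    rwa [hmqp, segment_symm, hqz]
  have hqT : q ∈ T := (mem_insert.mp hq).resolve_left hqp
  have hmqT : m q ∈ T := (mem_insert.mp (hmem q hq)).resolve_left hmqp
  exact ((hσ.convex_lt L).segment_subset ⟨hTH hqT, hL q hqT⟩ ⟨hTH hmqT, hL _ hmqT⟩).trans
    fun x hx => hx.2

lemma exists_top_pair_addEdge (hσ : QuasilinearOn ℝ H σ)
    (hpz : ∀ ξ ∈ segment ℝ p z, σ ξ = σ z) {T : Finset Pt} (hpT : p ∉ T) (hTH : ↑T ⊆ H)
    (hinj : Set.InjOn σ T) (h2 : 1 < #{x ∈ T | σ z < σ x}) :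
    ∃ t₁ ∈ T, ∃ t₂ ∈ T, t₁ ≠ t₂ ∧ σ z < σ t₁ ∧ σ z < σ t₂ ∧
      ∀ m, IsNCMatching (insert p ((T.erase t₁).erase t₂)) m → m p = z →
        IsNCMatching (insert p T) (addEdge m t₁ t₂) := by
  obtain ⟨t₁, ht₁, t₂, ht₂, h12, h21, htop⟩ :=
    exists_top_two σ (hinj.mono (coe_subset.mpr (filter_subset _ _))) h2
  rw [mem_filter] at ht₁ ht₂
  have hT'T : (T.erase t₁).erase t₂ ⊆ T := (erase_subset _ _).trans (erase_subset _ _)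
  have hL : ∀ x ∈ (T.erase t₁).erase t₂, σ x < σ t₂ := by
    intro x hx
    obtain ⟨hx2, hx1, hxT⟩ : x ≠ t₂ ∧ x ≠ t₁ ∧ x ∈ T := by simpa using hx
    by_cases hxz : σ z < σ x
    · exact htop x (mem_filter.mpr ⟨hxT, hxz⟩) hx1 hx2
    · exact (not_lt.mp hxz).trans_lt ht₂.2
  refine ⟨t₁, ht₁.1, t₂, ht₂.1, h12, ht₁.2, ht₂.2, fun m hm hmp => ?_⟩
  have hpt₁ : p ≠ t₁ := fun h => hpT (h ▸ ht₁.1)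
  have hpt₂ : p ≠ t₂ := fun h => hpT (h ▸ ht₂.1)
  have hT : insert t₁ (insert t₂ (insert p ((T.erase t₁).erase t₂))) = insert p T := by
    ext x
    simp only [mem_insert, mem_erase]
    constructor
    · rintro (rfl | rfl | rfl | ⟨-, -, hx⟩) <;> simp_all
    · rintro (rfl | hx) <;> by_cases h₁ : x = t₁ <;> by_cases h₂ : x = t₂ <;> simp_all
  rw [← hT]
  refine hm.addEdge (by simp [hpt₁.symm]) (by simp [hpt₂.symm]) h12 fun q hq => ?_
  have h_lt := hm.segment_subset_lt hσ.1 hpz ((coe_subset.mpr hT'T).trans hTH) hmp hL q hq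
  have h_ge : segment ℝ t₁ t₂ ⊆ {x | σ t₂ ≤ σ x} :=
    ((hσ.2 (σ t₂)).segment_subset ⟨hTH ht₁.1, h21.le⟩ ⟨hTH ht₂.1, le_rfl⟩).trans
      fun x hx => hx.2
  exact Set.eq_empty_of_forall_notMem fun ξ ⟨h₁, h₂⟩ =>
    (Set.mem_ofPred.mp (h_lt h₂)).not_ge (h_ge h₁)

lemma exists_same_side_pair_addEdge (hσ : QuasilinearOn ℝ H σ)
    (hpz : ∀ ξ ∈ segment ℝ p z, σ ξ = σ z) {T : Finset Pt} (hpT : p ∉ T) (hTH : ↑T ⊆ H)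
    (hinj : Set.InjOn σ T) (h2 : 1 < #{x ∈ T | σ z < σ x} ∨ 1 < #{x ∈ T | σ x < σ z}) :
    ∃ t₁ ∈ T, ∃ t₂ ∈ T, t₁ ≠ t₂ ∧ (σ z < σ t₁ ∧ σ z < σ t₂ ∨ σ t₁ < σ z ∧ σ t₂ < σ z) ∧
      ∀ m, IsNCMatching (insert p ((T.erase t₁).erase t₂)) m → m p = z →
        IsNCMatching (insert p T) (addEdge m t₁ t₂) := by
  rcases h2 with hup | hdown
  · obtain ⟨t₁, ht₁, t₂, ht₂, h12, h₁, h₂, hglue⟩ :=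
      exists_top_pair_addEdge hσ hpz hpT hTH hinj hup
    exact ⟨t₁, ht₁, t₂, ht₂, h12, Or.inl ⟨h₁, h₂⟩, hglue⟩
  · obtain ⟨t₁, ht₁, t₂, ht₂, h12, h₁, h₂, hglue⟩ :=
      exists_top_pair_addEdge (σ := Neg.neg ∘ σ) (hσ.antitone_comp fun _ _ => neg_le_neg)
        (by simpa using hpz) hpT hTH (neg_injective.comp_injOn hinj) (by simpa using hdown)
    exact ⟨t₁, ht₁, t₂, ht₂, h12, Or.inr (by simpa using And.intro h₁ h₂), hglue⟩

theorem exists_isNCMatching_of_quasilinearOn (hσ : QuasilinearOn ℝ H σ)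
    (hpz : ∀ ξ ∈ segment ℝ p z, σ ξ = σ z) (T : Finset Pt) (hpT : p ∉ T) (hzT : z ∈ T)
    (hTH : ↑T ⊆ H) (hinj : Set.InjOn σ T) (hup : Even #{x ∈ T | σ z < σ x})
    (hdown : Even #{x ∈ T | σ x < σ z}) : ∃ m, IsNCMatching (insert p T) m ∧ m p = z := by
  induction hn : #T using Nat.strong_induction_on generalizing T with
  | _ n ih =>
  have hpT' {t} (ht : t ∈ T) : p ≠ t := fun h => hpT (h ▸ ht)
  by_cases hbase : #{x ∈ T | σ z < σ x} ≤ 1 ∧ #{x ∈ T | σ x < σ z} ≤ 1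
  · have hup0 : {x ∈ T | σ z < σ x} = ∅ := card_eq_zero.mp (by grind)
    have hdown0 : {x ∈ T | σ x < σ z} = ∅ := card_eq_zero.mp (by grind)
    have hTz : T = {z} := eq_singleton_iff_unique_mem.mpr ⟨hzT, fun x hx => hinj hx hzT <|
      le_antisymm (not_lt.mp (filter_eq_empty_iff.mp hup0 hx))
        (not_lt.mp (filter_eq_empty_iff.mp hdown0 hx))⟩
    rw [hTz]
    exact exists_isNCMatching_pair (hpT' hzT)
  obtain ⟨t₁, ht₁, t₂, ht₂, h12, hside, hglue⟩ :=
    exists_same_side_pair_addEdge hσ hpz hpT hTH hinj (by omega)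
  have ht₂' : t₂ ∈ T.erase t₁ := mem_erase.mpr ⟨h12.symm, ht₂⟩
  have hT'T : (T.erase t₁).erase t₂ ⊆ T := (erase_subset _ _).trans (erase_subset _ _)
  have hzt : z ≠ t₁ ∧ z ≠ t₂ := by
    constructor <;> rintro rfl <;> rcases hside with h | h <;> simp_all
  have hcard : #((T.erase t₁).erase t₂) < n := by
    rw [← hn, card_erase_of_mem ht₂', card_erase_of_mem ht₁]
    have := card_pos.mpr ⟨t₁, ht₁⟩
    omega
  obtain ⟨m, hm, hmp⟩ := ih _ hcard _ (fun h => hpT (hT'T h)) (by simp [hzt.1, hzt.2, hzT])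
    ((coe_subset.mpr hT'T).trans hTH) (hinj.mono (coe_subset.mpr hT'T))
    (by rw [even_card_filter_erase_iff ht₂', even_card_filter_erase_iff ht₁]
        rcases hside with h | h <;> simp [h.1, h.2, h.1.le, h.2.le, hup])
    (by rw [even_card_filter_erase_iff ht₂', even_card_filter_erase_iff ht₁]
        rcases hside with h | h <;> simp [h.1, h.2, h.1.le, h.2.le, hdown]) rfl
  exact ⟨_, hglue m hm hmp, (addEdge_apply_of_ne m (hpT' ht₁) (hpT' ht₂)).trans hmp⟩

end Sweep

section Separated

variable {P : Finset Pt} {p z : Pt} (f : Pt →L[ℝ] ℝ)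

theorem exists_isNCMatching_of_even_sides (hP : GenPos P) (hp : p ∈ P) (hz : z ∈ P)
    (hpz : p ≠ z) (hf : ∀ x ∈ P, x ≠ p → f p < f x)
    (hpos : Even #{x ∈ P | 0 < orient p z x}) (hneg : Even #{x ∈ P | orient p z x < 0}) :
    ∃ m, IsNCMatching P m ∧ m p = z := by
  set D : Pt →ᵃ[ℝ] ℝ := f.toAffineMap - AffineMap.const ℝ Pt (f p)
  have hD (x : Pt) : D x = f x - f p := rfl
  -- `σ x` is where the ray from `p` through `x` meets the line `f = f p + 1`, measured by
  -- `orient p z`: it sorts the points by angle around `p`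
  set σ : Pt → ℝ := fun x => orient p z x / D x
  have hTH : ↑(P.erase p) ⊆ {x | 0 < D x} := fun x hx => by
    obtain ⟨hxp, hxP⟩ := mem_erase.mp hx
    simpa [hD] using hf x hxP hxp
  have hσ : QuasilinearOn ℝ {x | 0 < D x} σ :=
    quasilinearOn_div ((convex_Ioi 0).affine_preimage D) _ _ fun x hx => hx
  have hσz : σ z = 0 := by simp [σ]
  have hpz' : ∀ ξ ∈ segment ℝ p z, σ ξ = σ z := fun ξ hξ => by
    simp [σ, orient_eq_zero_of_mem_segment hξ, hσz]
  have hinj : Set.InjOn σ ↑(P.erase p) := by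
    intro x hx y hy hxy
    by_contra hne
    obtain ⟨hxp, hxP⟩ := mem_erase.mp hx
    obtain ⟨hyp, hyP⟩ := mem_erase.mp hy
    have hDz : 0 < D z := by simpa [hD] using hf z hz hpz.symm
    have key := congrArg f (orient_smul_sub_orient_smul p z x y)
    simp only [map_sub, map_smul, smul_eq_mul, ← hD] at key
    have hcross := (div_eq_div_iff (hTH hx).ne' (hTH hy).ne').mp hxy
    have : orient p x y * D z = 0 := by linarith
    exact hP.orient_ne_zero hp hxP hyP hxp.symm hyp.symm hne (by simpa [hDz.ne'] using this)
  have hside : ∀ x ∈ P.erase p,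
      (σ z < σ x ↔ 0 < orient p z x) ∧ (σ x < σ z ↔ orient p z x < 0) := fun x hx => by
    rw [hσz, div_pos_iff_of_pos_right (hTH hx), div_lt_iff₀ (hTH hx), zero_mul]
    exact ⟨Iff.rfl, Iff.rfl⟩
  obtain ⟨m, hm, hmp⟩ := exists_isNCMatching_of_quasilinearOn hσ hpz' (P.erase p)
    (notMem_erase p P) (mem_erase.mpr ⟨hpz.symm, hz⟩) hTH hinj
    (by simpa [filter_congr fun x hx => (hside x hx).1, even_card_filter_erase_iff hp] using hpos)
    (by simpa [filter_congr fun x hx => (hside x hx).2, even_card_filter_erase_iff hp] using hneg)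
  exact ⟨m, insert_erase hp ▸ hm, hmp⟩

lemma orient_neg_of_separated {a b : Pt} (hz : z ∈ P) (hpz : p ≠ z)
    (hf : ∀ x ∈ P, x ≠ p → f p < f x) (ha : a ∈ P) (hb : b ∈ P)
    (hDa : 0 < orient p z a) (hDb : orient p z b < 0) : orient p a b < 0 := by
  have hap : a ≠ p := by rintro rfl; simp at hDa
  have hbp : b ≠ p := by rintro rfl; simp at hDb
  have key := congrArg f (orient_smul_sub_orient_smul p z a b)
  simp only [map_sub, map_smul, smul_eq_mul] at key
  have hfa := hf a ha hap
  have hfb := hf b hb hbp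
  have hfz := hf z hz hpz.symm
  nlinarith [mul_pos hDa (sub_pos.mpr hfb), mul_pos (neg_pos.mpr hDb) (sub_pos.mpr hfa)]

theorem exists_opposite_pair_orient_neg (hP : GenPos P) (hp : p ∈ P) (hz : z ∈ P)
    (hpz : p ≠ z) (hf : ∀ x ∈ P, x ≠ p → f p < f x)
    (hpos : {x ∈ P | 0 < orient p z x}.Nonempty) (hneg : {x ∈ P | orient p z x < 0}.Nonempty) :
    ∃ a ∈ P, ∃ b ∈ P, 0 < orient p z a ∧ orient p z b < 0 ∧
      ∀ q ∈ P, q ≠ a → q ≠ b → q ≠ z → orient a b q < 0 := by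
  set D := orient p z
  -- `orient p b a / (D a - D b)` locates, in units of `z - p`, where the line `ab` crosses
  -- the ray from `p` through `z`; take the pair crossing it farthest out
  obtain ⟨⟨a, b⟩, hab, hmax⟩ := ({x ∈ P | 0 < D x} ×ˢ {x ∈ P | D x < 0}).exists_max_image
    (fun ab => orient p ab.2 ab.1 / (D ab.1 - D ab.2)) (hpos.product hneg)
  simp only [mem_product, mem_filter] at hab hmax
  obtain ⟨⟨ha, hDa⟩, hb, hDb⟩ := hab
  refine ⟨a, ha, b, hb, hDa, hDb, fun q hq hqa hqb hqz => ?_⟩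
  by_cases hqp : q = p
  · rw [hqp, show orient a b p = orient p a b by simp only [orient_apply]; ring]
    exact orient_neg_of_separated f hz hpz hf ha hb hDa hDb
  have hab : a ≠ b := by rintro rfl; linarith
  refine lt_of_le_of_ne ?_ (hP.orient_ne_zero ha hb hq hab (Ne.symm hqa) (Ne.symm hqb))
  rcases (hP.orient_ne_zero hp hz hq hpz (Ne.symm hqp) (Ne.symm hqz)).lt_or_gt with hDq | hDq
  · have hle := hmax (a, q) ⟨⟨ha, hDa⟩, hq, hDq⟩
    rw [div_le_div_iff₀ (by linarith) (by linarith)] at hle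
    have key : orient p b a * (D a - D q) - orient p q a * (D a - D b) =
        -(D a * orient a b q) := by
      simp only [D, orient_apply]; ring
    nlinarith
  · have hle := hmax (q, b) ⟨⟨hq, hDq⟩, hb, hDb⟩
    rw [div_le_div_iff₀ (by linarith) (by linarith)] at hle
    have key : orient p b a * (D q - D b) - orient p b q * (D a - D b) =
        D b * orient a b q := by
      simp only [D, orient_apply]; ring
    nlinarith

theorem exists_isNCMatching_of_odd_sides (hP : GenPos P) (hp : p ∈ P) (hz : z ∈ P)
    (hpz : p ≠ z) (hf : ∀ x ∈ P, x ≠ p → f p < f x) (hzint : z ∈ convexHull ℝ (↑P \ {z}))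
    (hpos : Odd #{x ∈ P | 0 < orient p z x}) (hneg : Odd #{x ∈ P | orient p z x < 0}) :
    ∃ m, IsNCMatching P m ∧ m p = z := by
  obtain ⟨a, ha, b, hb, hDa, hDb, hside⟩ := exists_opposite_pair_orient_neg f hP hp hz hpz hf
    (card_pos.mp hpos.pos) (card_pos.mp hneg.pos)
  have hab : a ≠ b := by rintro rfl; linarith
  have hza : z ≠ a := by rintro rfl; simp at hDa
  have hzb : z ≠ b := by rintro rfl; simp at hDb
  have hpa : p ≠ a := by rintro rfl; simp at hDa
  have hpb : p ≠ b := by rintro rfl; simp at hDb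
  have hzside : orient a b z < 0 := by
    refine lt_of_le_of_ne ?_ (hP.orient_ne_zero ha hb hz hab hza.symm hzb.symm)
    refine (convexHull_min (fun x hx => ?_) ((convex_Iic 0).affine_preimage (orient a b))
      hzint : z ∈ orient a b ⁻¹' Set.Iic 0)
    obtain ⟨hx, hxz⟩ := hx
    show orient a b x ≤ 0
    by_cases hxa : x = a
    · simp [hxa]
    by_cases hxb : x = b
    · simp [hxb]
    exact (hside x hx hxa hxb hxz).le
  have hb' : b ∈ P.erase a := mem_erase.mpr ⟨hab.symm, hb⟩
  set P₂ := (P.erase a).erase b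
  have hP₂ {x} : x ∈ P₂ ↔ x ≠ b ∧ x ≠ a ∧ x ∈ P := by simp [P₂]
  have hneg₂ : ∀ x ∈ P₂, orient a b x < 0 := fun x hx => by
    obtain ⟨hxb, hxa, hxP⟩ := hP₂.mp hx
    by_cases hxz : x = z
    · rwa [hxz]
    exact hside x hxP hxa hxb hxz
  obtain ⟨m, hm, hmp⟩ := exists_isNCMatching_of_even_sides f
    (hP.mono ((erase_subset _ _).trans (erase_subset _ _))) (hP₂.mpr ⟨hpb, hpa, hp⟩)
    (hP₂.mpr ⟨hzb, hza, hz⟩) hpz (fun x hx => hf x (hP₂.mp hx).2.2)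
    (by rw [even_card_filter_erase_iff hb', even_card_filter_erase_iff ha]
        simp [hDa, hDb.le, Nat.not_even_iff_odd, hpos])
    (by rw [even_card_filter_erase_iff hb', even_card_filter_erase_iff ha]
        simp [hDa.le, hDb, Nat.not_even_iff_odd, hneg])
  refine ⟨addEdge m a b, ?_, (addEdge_apply_of_ne m hpa hpb).trans hmp⟩
  rw [← insert_erase ha, ← insert_erase hb']
  exact hm.addEdge (by simp) (by simp) hab fun q hq =>
    segment_inter_segment_eq_empty_of_orient_neg (hneg₂ q hq) (hneg₂ _ (hm.1 q hq))

end Separated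

lemma card_filter_orient_pos_add_neg {P : Finset Pt} (hP : GenPos P) {p z : Pt} (hp : p ∈ P)
    (hz : z ∈ P) (hpz : p ≠ z) :
    #{x ∈ P | 0 < orient p z x} + #{x ∈ P | orient p z x < 0} + 2 = #P := by
  have hzero : {x ∈ P | orient p z x = 0} = {p, z} := by
    ext x
    simp only [mem_filter, mem_insert, mem_singleton]
    constructor
    · rintro ⟨hx, h0⟩
      by_contra! hne
      exact hP.orient_ne_zero hp hz hx hpz hne.1.symm hne.2.symm h0
    · rintro (rfl | rfl) <;> simp [hp, hz]
  have hsplit : #{x ∈ P | 0 < orient p z x} + #{x ∈ P | orient p z x < 0} +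
      #{x ∈ P | orient p z x = 0} = #P := by
    rw [← card_union_of_disjoint, ← card_union_of_disjoint, ← filter_or, ← filter_or,
      filter_true_of_mem]
    · intro x _
      rcases lt_trichotomy (orient p z x) 0 with h | h | h <;> simp [h]
    · rw [← filter_or]
      exact disjoint_filter.mpr fun x _ h => by rcases h with h | h <;> simp [h.ne, h.ne']
    · exact disjoint_filter.mpr fun x _ h => h.not_gt
  rwa [hzero, card_pair hpz] at hsplit

theorem Set.Finite.exists_forall_lt_of_notMem_convexHull {E : Type*} [NormedAddCommGroup E]
    [NormedSpace ℝ E] {s : Set E} (hs : s.Finite) {x : E} (hx : x ∉ convexHull ℝ s) :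
    ∃ f : E →L[ℝ] ℝ, ∀ y ∈ s, f x < f y := by
  obtain ⟨f, u, hfx, hfu⟩ := geometric_hahn_banach_point_closed (convex_convexHull ℝ s)
    (hs.isCompact_convexHull (𝕜 := ℝ)).isClosed hx
  exact ⟨f, fun y hy => hfx.trans (hfu y (subset_convexHull ℝ s hy))⟩

theorem feasible_of_notMem_convexHull {P : Finset Pt} (hP : GenPos P) (heven : Even #P)
    {p z : Pt} (hp : p ∈ P) (hpext : p ∉ convexHull ℝ (↑P \ {p})) (hz : z ∈ P)
    (hzint : z ∈ convexHull ℝ (↑P \ {z})) : Feasible P p z := by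
  have hpz : p ≠ z := by rintro rfl; exact hpext hzint
  obtain ⟨f, hf⟩ := P.finite_toSet.sdiff.exists_forall_lt_of_notMem_convexHull hpext
  replace hf : ∀ x ∈ P, x ≠ p → f p < f x := fun x hx hxp => hf x ⟨hx, hxp⟩
  have hcount := card_filter_orient_pos_add_neg hP hp hz hpz
  rcases Nat.even_or_odd #{x ∈ P | 0 < orient p z x} with hpos | hpos
  · exact exists_isNCMatching_of_even_sides f hP hp hz hpz hf hpos
      (by rw [Nat.even_iff] at *; omega)
  · exact exists_isNCMatching_of_odd_sides f hP hp hz hpz hf hzint hpos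
      (by rw [Nat.even_iff] at heven; rw [Nat.odd_iff] at *; omega)

theorem exists_notMem_convexHull_sdiff_forall_le {E : Type*} [NormedAddCommGroup E]
    [NormedSpace ℝ E] {s : Set E} (hs : s.Finite) (hne : s.Nonempty) (l : E →L[ℝ] ℝ) :
    ∃ p ∈ s, p ∉ convexHull ℝ (s \ {p}) ∧ ∀ x ∈ convexHull ℝ s, l x ≤ l p := by
  have hK : IsCompact (convexHull ℝ s) := hs.isCompact_convexHull (𝕜 := ℝ)
  have hF := ContinuousLinearMap.toExposed.isExposed (l := l) (A := convexHull ℝ s)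
  obtain ⟨x, hxK, hxmax⟩ := hK.exists_isMaxOn (hne.mono (subset_convexHull ℝ s))
    l.continuous.continuousOn
  obtain ⟨p, hp⟩ := (hF.isCompact hK).extremePoints_nonempty ⟨x, hxK, fun y hy => hxmax hy⟩
  have hpK := hF.isExtreme.extremePoints_subset_extremePoints hp
  refine ⟨p, extremePoints_convexHull_subset hpK, fun h => ?_, hp.1.2⟩
  rw [(convex_convexHull ℝ s).mem_extremePoints_iff_mem_sdiff_convexHull_sdiff] at hpK
  exact hpK.2 (convexHull_mono (Set.sdiff_subset_sdiff_left (subset_convexHull ℝ s)) h)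

theorem dist_lt_dist_of_inner_le {E : Type*} [NormedAddCommGroup E] [InnerProductSpace ℝ E]
    {p v w : E} (hpv : p ≠ v) (h : inner ℝ (v - w) v ≤ inner ℝ (v - w) p) :
    dist v w < dist p w := by
  have hpos : 0 < ‖p - v‖ := norm_pos_iff.mpr (sub_ne_zero.mpr hpv)
  have hinner : 0 ≤ inner ℝ (p - v) (v - w) := by
    rw [real_inner_comm, inner_sub_right]; linarith
  rw [dist_eq_norm, dist_eq_norm, ← sq_lt_sq₀ (norm_nonneg _) (norm_nonneg _),
    show p - w = (p - v) + (v - w) by abel, norm_add_sq_real]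
  nlinarith

theorem longest_feasible_edge_has_hull_vertex_general (n : ℕ) (P : Finset Pt)
    (hcard : P.card = 2 * n) (hgp : GenPos P)
    (v w : Pt) (hw : w ∈ P)
    (hmax : ∀ a ∈ P, ∀ b ∈ P, a ≠ b → Feasible P a b → dist a b ≤ dist v w) :
    v ∉ convexHull ℝ ((P : Set Pt) \ {v}) ∨ w ∉ convexHull ℝ ((P : Set Pt) \ {w}) := by
  by_contra! ⟨hv, hw'⟩
  obtain ⟨p, hp, hpext, hpmax⟩ :=
    exists_notMem_convexHull_sdiff_forall_le P.finite_toSet ⟨w, hw⟩ (innerSL ℝ (v - w))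
  have hpv : p ≠ v := by rintro rfl; exact hpext hv
  have hpw : p ≠ w := by rintro rfl; exact hpext hw'
  have hfeas := feasible_of_notMem_convexHull hgp ⟨n, by omega⟩ hp hpext hw hw'
  have hlt := dist_lt_dist_of_inner_le hpv (hpmax v (convexHull_mono Set.sdiff_subset hv))
  exact (hmax p hp w hw hpw hfeas).not_gt hlt

/-- If `{v,w}` is a feasible edge of maximal length among all feasible edges
of a set `P` of `2n` points in general position, then `v` or `w` is a vertex of the convex
hull of `P`. -/
theorem longest_feasible_edge_has_hull_vertex (n : ℕ) (P : Finset Pt)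
    (hcard : P.card = 2 * n) (hgp : GenPos P)
    (v w : Pt) (hv : v ∈ P) (hw : w ∈ P) (hvw : v ≠ w)
    (hfeas : Feasible P v w)
    (hmax : ∀ a ∈ P, ∀ b ∈ P, a ≠ b → Feasible P a b → dist a b ≤ dist v w) :
    v ∉ convexHull ℝ ((P : Set Pt) \ {v}) ∨ w ∉ convexHull ℝ ((P : Set Pt) \ {w}) :=
  longest_feasible_edge_has_hull_vertex_general n P hcard hgp v w hw hmax
end
end

section
/- Let x ∈ ℝ², let u and v be unit vectors in ℝ² with inner product ⟨u,v⟩ ≤ 0, and let S = {x + s·u : s ≥ 0} ∪ {x + t·v : t ≥ 0} be the boundary of the corresponding sector of angle at least π/2. Then for any two distinct points p, q ∈ S there exists an open half-plane H whose boundary is the line through p and q such that any two points a, b ∈ S ∩ H satisfy dist(a,b) ≤ dist(p,q). (The boundary of a big sector has the decreasing chords property.) -/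
noncomputable section

open scoped InnerProductSpace

/-! Write `p = x + a • u`. If `q` lies on the same ray, the line `pq` contains that ray and the
open side away from the other ray misses `S`. Otherwise `q = x + b • v`, and on the side of `pq`
facing `x` the set `S` reduces to the segments `[x, p)` and `[x, q)`. There
`‖s • u - t • v‖² = s² ‖u‖² - 2 s t ⟪u, v⟫ + t² ‖v‖²` is monotone in `s, t ≥ 0` since
`⟪u, v⟫ ≤ 0`, so no chord is longer than `‖p - q‖`. -/

section Sector

variable {E : Type*} [NormedAddCommGroup E] [InnerProductSpace ℝ E]

theorem norm_smul_sub_smul_le_of_inner_nonpos {u v : E} (huv : ⟪u, v⟫_ℝ ≤ 0) {s t a b : ℝ}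
    (hs : 0 ≤ s) (hsa : s ≤ a) (ht : 0 ≤ t) (htb : t ≤ b) :
    ‖s • u - t • v‖ ≤ ‖a • u - b • v‖ := by
  have hexpand : ∀ α β : ℝ, ‖α • u - β • v‖ ^ 2 =
      α ^ 2 * ‖u‖ ^ 2 - 2 * (α * β) * ⟪u, v⟫_ℝ + β ^ 2 * ‖v‖ ^ 2 := fun α β => by
    rw [norm_sub_sq_real, norm_smul, norm_smul, real_inner_smul_left, real_inner_smul_right,
      Real.norm_eq_abs, Real.norm_eq_abs, mul_pow, mul_pow, sq_abs, sq_abs]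
    ring
  rw [← sq_le_sq₀ (norm_nonneg _) (norm_nonneg _), hexpand, hexpand]
  have hst : s * t ≤ a * b := mul_le_mul hsa htb ht (hs.trans hsa)
  have hs2 : s ^ 2 ≤ a ^ 2 := pow_le_pow_left₀ hs hsa 2
  have ht2 : t ^ 2 ≤ b ^ 2 := pow_le_pow_left₀ ht htb 2
  nlinarith [mul_le_mul_of_nonneg_right hs2 (sq_nonneg ‖u‖),
    mul_le_mul_of_nonneg_right ht2 (sq_nonneg ‖v‖), mul_le_mul_of_nonpos_right hst huv]

theorem norm_smul_sub_smul_same_le_of_inner_nonpos {u v : E} (huv : ⟪u, v⟫_ℝ ≤ 0)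
    {s s' a b : ℝ} (hs : 0 ≤ s) (hsa : s ≤ a) (hs' : 0 ≤ s') (hs'a : s' ≤ a) (hb : 0 ≤ b) :
    ‖s • u - s' • u‖ ≤ ‖a • u - b • v‖ :=
  calc ‖s • u - s' • u‖ = |s - s'| * ‖u‖ := by rw [← sub_smul, norm_smul, Real.norm_eq_abs]
    _ ≤ a * ‖u‖ := by gcongr; exact abs_sub_le_of_nonneg_of_le hs hsa hs' hs'a
    _ = ‖a • u - (0 : ℝ) • v‖ := by
      rw [zero_smul, sub_zero, norm_smul, Real.norm_of_nonneg (hs.trans hsa)]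
    _ ≤ ‖a • u - b • v‖ :=
      norm_smul_sub_smul_le_of_inner_nonpos huv (hs.trans hsa) le_rfl le_rfl hb

variable (x u v : E)

def sectorBoundary : Set E :=
  {y | ∃ s : ℝ, 0 ≤ s ∧ y = x + s • u} ∪ {y | ∃ t : ℝ, 0 ≤ t ∧ y = x + t • v}

theorem sectorBoundary_comm : sectorBoundary x u v = sectorBoundary x v u :=
  Set.union_comm _ _

def truncatedSectorBoundary (a b : ℝ) : Set E :=
  {y | ∃ s : ℝ, 0 ≤ s ∧ s ≤ a ∧ y = x + s • u} ∪ {y | ∃ t : ℝ, 0 ≤ t ∧ t ≤ b ∧ y = x + t • v}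

variable {x u v}

theorem dist_le_of_mem_truncatedSectorBoundary (huv : ⟪u, v⟫_ℝ ≤ 0) {a b : ℝ} (ha : 0 ≤ a)
    (hb : 0 ≤ b) {y z : E} (hy : y ∈ truncatedSectorBoundary x u v a b)
    (hz : z ∈ truncatedSectorBoundary x u v a b) :
    dist y z ≤ dist (x + a • u) (x + b • v) := by
  have hvu : ⟪v, u⟫_ℝ ≤ 0 := real_inner_comm u v ▸ huv
  rcases hy with ⟨s, hs, hsa, rfl⟩ | ⟨t, ht, htb, rfl⟩ <;>
    rcases hz with ⟨s', hs', hs'a, rfl⟩ | ⟨t', ht', ht'b, rfl⟩ <;>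
    simp only [dist_eq_norm, add_sub_add_left_eq_sub]
  · exact norm_smul_sub_smul_same_le_of_inner_nonpos huv hs hsa hs' hs'a hb
  · exact norm_smul_sub_smul_le_of_inner_nonpos huv hs hsa ht' ht'b
  · rw [norm_sub_rev]
    exact norm_smul_sub_smul_le_of_inner_nonpos huv hs' hs'a ht htb
  · rw [norm_sub_rev (a • u)]
    exact norm_smul_sub_smul_same_le_of_inner_nonpos hvu ht htb ht' ht'b ha

end Sector

theorem det2_smul_add_smul (u v : Pt) (α β γ δ : ℝ) :
    det2 (α • u + β • v) (γ • u + δ • v) = (α * δ - β * γ) * det2 u v := by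
  simp only [det2, PiLp.add_apply, PiLp.smul_apply, smul_eq_mul]
  ring

theorem exists_halfPlane_forall_pos {α : Type*} (f : α → ℝ) (c : ℝ) :
    ∃ H : Set α, (H = {y | 0 < f y} ∨ H = {y | f y < 0}) ∧
      ∀ y ∈ H, ∀ k : ℝ, f y = k * c → 0 < k := by
  rcases lt_trichotomy c 0 with hc | rfl | hc
  · exact ⟨_, Or.inr rfl, fun y (hy : f y < 0) k hk => pos_of_mul_neg_left (hk ▸ hy) hc.le⟩
  · exact ⟨_, Or.inl rfl, fun y (hy : 0 < f y) k hk => by simp [hk] at hy⟩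
  · exact ⟨_, Or.inl rfl, fun y (hy : 0 < f y) k hk => pos_of_mul_pos_left (hk ▸ hy) hc.le⟩

def DecreasingChordAt (S : Set Pt) (p q : Pt) : Prop :=
  ∃ H : Set Pt, (H = {y | 0 < det2 (q - p) (y - p)} ∨ H = {y | det2 (q - p) (y - p) < 0}) ∧
    ∀ a ∈ S ∩ H, ∀ b ∈ S ∩ H, dist a b ≤ dist p q

variable {x u v : Pt}

theorem decreasingChordAt_same_ray (a b : ℝ) :
    DecreasingChordAt (sectorBoundary x u v) (x + a • u) (x + b • u) := by
  have hchord : x + b • u - (x + a • u) = (b - a) • u + (0 : ℝ) • v := by module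
  -- On the ray through `v` the determinant is `(-t) * c`, so the chosen side misses that ray.
  obtain ⟨H, hH, hpos⟩ := exists_halfPlane_forall_pos
    (fun y => det2 (x + b • u - (x + a • u)) (y - (x + a • u))) (-((b - a) * det2 u v))
  refine ⟨H, hH, fun y ⟨hyS, hyH⟩ => ?_⟩
  exfalso
  rcases hyS with ⟨s, -, rfl⟩ | ⟨t, ht, rfl⟩
  · refine (hpos _ hyH 0 ?_).false
    rw [hchord, show x + s • u - (x + a • u) = (s - a) • u + (0 : ℝ) • v by module,
      det2_smul_add_smul]
    ring
  · refine (hpos _ hyH (-t) ?_).not_ge ?_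
    · rw [hchord, show x + t • v - (x + a • u) = (-a) • u + t • v by module, det2_smul_add_smul]
      ring
    · linarith

theorem decreasingChordAt_opposite_rays (huv : ⟪u, v⟫_ℝ ≤ 0) {a b : ℝ} (ha : 0 ≤ a)
    (hb : 0 ≤ b) : DecreasingChordAt (sectorBoundary x u v) (x + a • u) (x + b • v) := by
  have hchord : x + b • v - (x + a • u) = (-a) • u + b • v := by module
  obtain ⟨H, hH, hpos⟩ := exists_halfPlane_forall_pos
    (fun y => det2 (x + b • v - (x + a • u)) (y - (x + a • u))) (det2 u v)
  refine ⟨H, hH, ?_⟩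
  suffices hsub : sectorBoundary x u v ∩ H ⊆ truncatedSectorBoundary x u v a b from
    fun y hy z hz => dist_le_of_mem_truncatedSectorBoundary huv ha hb (hsub hy) (hsub hz)
  rintro y ⟨⟨s, hs, rfl⟩ | ⟨t, ht, rfl⟩, hyH⟩
  · have hk := hpos _ hyH (b * (a - s)) (by
      rw [hchord, show x + s • u - (x + a • u) = (s - a) • u + (0 : ℝ) • v by module,
        det2_smul_add_smul]
      ring)
    exact Or.inl ⟨s, hs, sub_nonneg.1 (pos_of_mul_pos_right hk hb).le, rfl⟩
  · have hk := hpos _ hyH (a * (b - t)) (by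
      rw [hchord, show x + t • v - (x + a • u) = (-a) • u + t • v by module, det2_smul_add_smul]
      ring)
    exact Or.inr ⟨t, ht, sub_nonneg.1 (pos_of_mul_pos_right hk ha).le, rfl⟩

theorem decreasingChordAt_of_mem_left_ray (huv : ⟪u, v⟫_ℝ ≤ 0) {a : ℝ} (ha : 0 ≤ a) {q : Pt}
    (hq : q ∈ sectorBoundary x u v) : DecreasingChordAt (sectorBoundary x u v) (x + a • u) q := by
  rcases hq with ⟨b, -, rfl⟩ | ⟨b, hb, rfl⟩
  · exact decreasingChordAt_same_ray a b
  · exact decreasingChordAt_opposite_rays huv ha hb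

theorem big_sector_decreasing_chords_general (x u v : Pt)
    (huv : ⟪u, v⟫_ℝ ≤ 0) (S : Set Pt)
    (hS : S = {y | ∃ s : ℝ, 0 ≤ s ∧ y = x + s • u} ∪ {y | ∃ t : ℝ, 0 ≤ t ∧ y = x + t • v})
    (p q : Pt) (hp : p ∈ S) (hq : q ∈ S) :
    ∃ H : Set Pt,
      (H = {y | 0 < det2 (q - p) (y - p)} ∨ H = {y | det2 (q - p) (y - p) < 0}) ∧
      ∀ a ∈ S ∩ H, ∀ b ∈ S ∩ H, dist a b ≤ dist p q := by
  change S = sectorBoundary x u v at hS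
  subst hS
  rcases hp with ⟨a, ha, rfl⟩ | ⟨a, ha, rfl⟩
  · exact decreasingChordAt_of_mem_left_ray huv ha hq
  · rw [sectorBoundary_comm] at hq ⊢
    exact decreasingChordAt_of_mem_left_ray (real_inner_comm u v ▸ huv) ha hq

/-- **the boundary of a big sector has the decreasing chords property.**
Let `x ∈ ℝ²`, let `u`, `v` be unit vectors with `⟪u,v⟫ ≤ 0`, and let
`S = {x + s•u : s ≥ 0} ∪ {x + t•v : t ≥ 0}` be the boundary of the corresponding sector of
angle at least `π/2`. Then for any two distinct points `p, q ∈ S` there is an open half-plane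
`H` bounded by the line through `p` and `q` such that any two points `a, b ∈ S ∩ H` satisfy
`dist a b ≤ dist p q`. -/
theorem big_sector_decreasing_chords (x u v : Pt) (hu : ‖u‖ = 1) (hv : ‖v‖ = 1)
    (huv : ⟪u, v⟫_ℝ ≤ 0) (S : Set Pt)
    (hS : S = {y | ∃ s : ℝ, 0 ≤ s ∧ y = x + s • u} ∪ {y | ∃ t : ℝ, 0 ≤ t ∧ y = x + t • v})
    (p q : Pt) (hp : p ∈ S) (hq : q ∈ S) (hpq : p ≠ q) :
    ∃ H : Set Pt,
      (H = {y | 0 < det2 (q - p) (y - p)} ∨ H = {y | det2 (q - p) (y - p) < 0}) ∧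
      ∀ a ∈ S ∩ H, ∀ b ∈ S ∩ H, dist a b ≤ dist p q :=
  big_sector_decreasing_chords_general x u v huv S hS p q hp hq
end
end

section
/- Let p_0, p_1, …, p_{2n−1} be 2n distinct points on a common circle in counterclockwise order and let M be a perfect non-crossing matching of these points. Then every edge of M of minimum length among the edges of M is a boundary edge, i.e., of the form {p_i, p_{i+1}} (indices modulo 2n). -/
/-!
Parametrize the points by angles `θ 0 < θ 1 < ⋯ < θ (N-1) < θ 0 + 2π`; the chord between angles
`α < β` has squared length `2r²(1 - cos (β - α))`. Take a minimal edge `{i, k}` with `i < k` that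
is not a boundary edge. One of the two arcs it cuts off, `(θ i, θ k)` or `(θ k, θ i + 2π)`, has
length at most `π`, and it contains the neighbour `i + 1` resp. `i - 1` of `i`. Since no edge
crosses `{i, k}`, the partner of that neighbour lies on the same open arc, so its edge spans a
strictly shorter arc of length `≤ π` and is strictly shorter.
-/

noncomputable section

/-- The points `p 0, p 1, …, p (N-1)` (indices in `ZMod N`) are distinct, lie on a common
circle, and are labeled in counterclockwise order: every triple of points with increasing
indices is positively (counterclockwise) oriented. -/
def OnCircleCCW (N : ℕ) (p : ZMod N → Pt) : Prop :=
  (∃ c : Pt, ∃ r : ℝ, 0 < r ∧ ∀ i, dist (p i) c = r) ∧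
  Function.Injective p ∧
  (∀ i j k : ZMod N, i.val < j.val → j.val < k.val →
    0 < det2 (p j - p i) (p k - p i))

/-- `σ` encodes a perfect non-crossing matching of the points `p 0, …, p (N-1)`: it is a
fixed-point free involution of the indices, and the closed segments induced by two distinct
edges are disjoint. -/
def IsNCM (N : ℕ) (p : ZMod N → Pt) (σ : ZMod N → ZMod N) : Prop :=
  (∀ i, σ (σ i) = i) ∧ (∀ i, σ i ≠ i) ∧
  (∀ i j : ZMod N, j ≠ i → j ≠ σ i →
    segment ℝ (p i) (p (σ i)) ∩ segment ℝ (p j) (p (σ j)) = ∅)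

open Real Set

def circlePt (c : Pt) (r θ : ℝ) : Pt := c + r • !₂[cos θ, sin θ]

lemma circlePt_periodic (c : Pt) (r : ℝ) : Function.Periodic (circlePt c r) (2 * π) := by
  intro θ
  simp only [circlePt, cos_add_two_pi, sin_add_two_pi]

lemma exists_eq_circlePt (x c : Pt) : ∃ θ, x = circlePt c (dist x c) θ := by
  set z : ℂ := Complex.orthonormalBasisOneI.repr.symm (x - c)
  have hz : ‖z‖ = dist x c := by rw [LinearIsometryEquiv.norm_map, dist_eq_norm]
  have hre : dist x c * cos z.arg = x 0 - c 0 := by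
    rw [← hz, Complex.norm_mul_cos_arg]; simp [z]
  have him : dist x c * sin z.arg = x 1 - c 1 := by
    rw [← hz, Complex.norm_mul_sin_arg]; simp [z]
  refine ⟨z.arg, ?_⟩
  ext i; fin_cases i
  · simp [circlePt, hre]
  · simp [circlePt, him]

lemma dist_circlePt_sq (c : Pt) (r α β : ℝ) :
    dist (circlePt c r α) (circlePt c r β) ^ 2 = 2 * r ^ 2 * (1 - cos (β - α)) := by
  rw [EuclideanSpace.dist_eq, sq_sqrt (by positivity), Fin.sum_univ_two]
  simp only [circlePt, Real.dist_eq, sq_abs, cos_sub, PiLp.add_apply, PiLp.smul_apply,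
    Matrix.cons_val_zero, Matrix.cons_val_one, Matrix.cons_val_fin_one, smul_eq_mul,
    add_sub_add_left_eq_sub]
  linear_combination r ^ 2 * (sin_sq_add_cos_sq α + sin_sq_add_cos_sq β)

lemma sin_add_sin_sub_sin_add (x y : ℝ) :
    sin x + sin y - sin (x + y) = 4 * sin (x / 2) * sin (y / 2) * sin ((x + y) / 2) := by
  have hx : x = 2 * (x / 2) := by ring
  have hy : y = 2 * (y / 2) := by ring
  set a := x / 2
  set b := y / 2
  rw [hx, hy, show 2 * a + 2 * b = 2 * (a + b) by ring, show 2 * (a + b) / 2 = a + b by ring,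
    sin_two_mul, sin_two_mul, sin_two_mul, sin_add, cos_add]
  linear_combination (-2 * sin a * cos a) * sin_sq_add_cos_sq b +
    (-2 * sin b * cos b) * sin_sq_add_cos_sq a

lemma det2_circlePt (c : Pt) (r α β γ : ℝ) :
    det2 (circlePt c r β - circlePt c r α) (circlePt c r γ - circlePt c r α) =
      4 * r ^ 2 * sin ((β - α) / 2) * sin ((γ - β) / 2) * sin ((γ - α) / 2) := by
  have h := sin_add_sin_sub_sin_add (β - α) (γ - β)
  rw [show β - α + (γ - β) = γ - α by ring] at h
  have expand : det2 (circlePt c r β - circlePt c r α) (circlePt c r γ - circlePt c r α) =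
      r ^ 2 * (sin (β - α) + sin (γ - β) - sin (γ - α)) := by
    simp only [det2, circlePt, add_sub_add_left_eq_sub, PiLp.sub_apply, PiLp.smul_apply,
      Matrix.cons_val_zero, Matrix.cons_val_one, Matrix.cons_val_fin_one, smul_eq_mul, sin_sub]
    ring
  rw [expand, h]
  ring

lemma dist_circlePt_lt_of_mem_Ioo {c : Pt} {r α β γ δ : ℝ} (hr : 0 < r)
    (hγ : γ ∈ Ioo α β) (hδ : δ ∈ Ioo α β) (hπ : β - α ≤ π) :
    dist (circlePt c r γ) (circlePt c r δ) < dist (circlePt c r α) (circlePt c r β) := by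
  rw [← pow_lt_pow_iff_left₀ dist_nonneg dist_nonneg two_ne_zero, dist_circlePt_sq,
    dist_circlePt_sq, ← cos_abs (δ - γ)]
  have hcos : cos (β - α) < cos |δ - γ| :=
    cos_lt_cos_of_nonneg_of_le_pi (abs_nonneg _) hπ
      (abs_sub_lt_iff.2 ⟨by linarith [hγ.1, hδ.2], by linarith [hγ.2, hδ.1]⟩)
  gcongr

lemma segment_inter_nonempty_of_det2_pos {a b c d : Pt}
    (habc : 0 < det2 (b - a) (c - a)) (habd : 0 < det2 (b - a) (d - a))
    (hacd : 0 < det2 (c - a) (d - a)) (hbcd : 0 < det2 (c - b) (d - b)) :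
    (segment ℝ a c ∩ segment ℝ b d).Nonempty := by
  set D := det2 (c - a) (d - b)
  have hD_abd : D = det2 (b - a) (d - a) + det2 (c - b) (d - b) := by
    simp only [D, det2, PiLp.sub_apply]; ring
  have hD_acd : D = det2 (c - a) (d - a) + det2 (b - a) (c - a) := by
    simp only [D, det2, PiLp.sub_apply]; ring
  have hD : 0 < D := by linarith
  set s := det2 (b - a) (d - a) / D
  set t := det2 (b - a) (c - a) / D
  have cramer : D • (a - b) + det2 (b - a) (d - a) • (c - a) = det2 (b - a) (c - a) • (d - b) := by
    ext i; fin_cases i <;>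
    · simp only [D, det2, PiLp.sub_apply, PiLp.add_apply, PiLp.smul_apply, smul_eq_mul, Fin.zero_eta,
        Fin.mk_one]
      ring
  have hst : a + s • (c - a) = b + t • (d - b) := by
    apply smul_right_injective Pt hD.ne'
    simp only [s, t, smul_add, smul_smul, mul_div_cancel₀ _ hD.ne']
    linear_combination (norm := module) cramer
  refine ⟨a + s • (c - a), ?_, ?_⟩
  · rw [segment_eq_image']
    exact ⟨s, ⟨by positivity, (div_le_one hD).2 (by linarith)⟩, rfl⟩
  · rw [segment_eq_image', hst]
    exact ⟨t, ⟨by positivity, (div_le_one hD).2 (by linarith)⟩, rfl⟩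

structure IsCCWParam {N : ℕ} (p : ZMod N → Pt) (c : Pt) (r : ℝ) (θ : ZMod N → ℝ) : Prop where
  pos : 0 < r
  eq_circlePt : ∀ u, p u = circlePt c r (θ u)
  mem_Ico : ∀ u, θ u ∈ Ico (θ 0) (θ 0 + 2 * π)
  lt_of_val_lt : ∀ u v : ZMod N, u.val < v.val → θ u < θ v

section

variable {N : ℕ} {p : ZMod N → Pt} {σ : ZMod N → ZMod N}

lemma OnCircleCCW.exists_isCCWParam [NeZero N] (h : OnCircleCCW N p) :
    ∃ c r θ, IsCCWParam p c r θ := by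
  obtain ⟨⟨c, r, hr, hc⟩, hinj, hccw⟩ := h
  choose θ₀ hθ₀ using fun u => exists_eq_circlePt (p u) c
  set θ := fun u => toIcoMod two_pi_pos (θ₀ 0) (θ₀ u)
  have hp : ∀ u, p u = circlePt c r (θ u) := fun u => by
    show _ = circlePt c r (toIcoMod _ _ _)
    rw [← self_sub_toIcoDiv_zsmul, (circlePt_periodic c r).sub_zsmul_eq, ← hc u, ← hθ₀ u]
  have hθ0 : θ 0 = θ₀ 0 := toIcoMod_eq_self _ |>.2 ⟨le_rfl, by linarith [pi_pos]⟩
  have hIco : ∀ u, θ u ∈ Ico (θ 0) (θ 0 + 2 * π) := fun u => hθ0 ▸ toIcoMod_mem_Ico _ _ _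
  have hpos : ∀ u, u ≠ 0 → θ 0 < θ u := fun u hu =>
    (hIco u).1.lt_of_ne fun h => hu (hinj (by rw [hp, hp, h]))
  refine ⟨c, r, θ, hr, hp, hIco, fun u v huv => ?_⟩
  have hv : v ≠ 0 := by rintro rfl; simp at huv
  rcases Nat.eq_zero_or_pos u.val with hu | hu
  · rw [(ZMod.val_eq_zero u).1 hu]
    exact hpos v hv
  have hu' : u ≠ 0 := by rintro rfl; simp at hu
  have hdet := hccw 0 u v (by simpa using hu) huv
  rw [hp, hp, hp, det2_circlePt] at hdet
  have half_pos : ∀ w, w ≠ 0 → 0 < sin ((θ w - θ 0) / 2) := fun w hw =>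
    sin_pos_of_pos_of_lt_pi (by linarith [hpos w hw]) (by linarith [(hIco w).2])
  have hsu := half_pos u hu'
  have hsv := half_pos v hv
  by_contra! hle
  have : sin ((θ v - θ u) / 2) ≤ 0 :=
    sin_nonpos_of_nonpos_of_neg_pi_le (by linarith) (by linarith [(hIco u).2, (hIco v).1])
  nlinarith [mul_pos (mul_pos (mul_pos (by norm_num : (0:ℝ) < 4) (pow_pos hr 2)) hsu) hsv]

lemma OnCircleCCW.segment_inter_nonempty (h : OnCircleCCW N p) {a b c d : ZMod N}
    (hab : a.val < b.val) (hbc : b.val < c.val) (hcd : c.val < d.val) :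
    (segment ℝ (p a) (p c) ∩ segment ℝ (p b) (p d)).Nonempty :=
  segment_inter_nonempty_of_det2_pos (h.2.2 a b c hab hbc) (h.2.2 a b d hab (hbc.trans hcd))
    (h.2.2 a c d (hab.trans hbc) hcd) (h.2.2 b c d hbc hcd)

variable [NeZero N]

lemma IsNCM.val_mem_Ioo (hccw : OnCircleCCW N p) (hσ : IsNCM N p σ) {a b : ZMod N}
    (hb : b.val ∈ Ioo a.val (σ a).val) : (σ b).val ∈ Ioo a.val (σ a).val := by
  obtain ⟨hinv, -, hdisj⟩ := hσ
  obtain ⟨hab, hbk⟩ := hb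
  have hba : b ≠ a := by rintro rfl; omega
  have hbσa : b ≠ σ a := by rintro rfl; omega
  have h1 : (σ b).val ≠ a.val := fun h => hbσa (by rw [← ZMod.val_injective N h, hinv])
  have h2 : (σ b).val ≠ (σ a).val := fun h => hba (by rw [← hinv b, ZMod.val_injective N h, hinv])
  by_contra hout
  rcases (by simp only [mem_Ioo] at hout; omega :
    (σ b).val < a.val ∨ (σ a).val < (σ b).val) with hlt | hlt
  · obtain ⟨x, hx⟩ := hccw.segment_inter_nonempty hlt hab hbk
    rw [segment_symm] at hx
    exact (hdisj b a hba.symm fun h => h1 (congrArg ZMod.val h.symm)).subset hx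
  · exact (hdisj a b hba hbσa).subset (hccw.segment_inter_nonempty hab hbk hlt).some_mem

lemma IsNCM.val_notMem_Icc (hccw : OnCircleCCW N p) (hσ : IsNCM N p σ) {a e : ZMod N}
    (he : e.val ∉ Icc a.val (σ a).val) : (σ e).val ∉ Icc a.val (σ a).val := by
  intro ⟨h1, h2⟩
  rcases h1.eq_or_lt with h1 | h1
  · exact he (by rw [← hσ.1 e, ZMod.val_injective N h1.symm]; exact ⟨h1 ▸ h2, le_rfl⟩)
  rcases h2.eq_or_lt with h2 | h2
  · exact he (by rw [← hσ.1 e, ZMod.val_injective N h2, hσ.1]; exact ⟨le_rfl, h2 ▸ h1.le⟩)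
  exact he (Ioo_subset_Icc_self (hσ.1 e ▸ hσ.val_mem_Ioo hccw ⟨h1, h2⟩))

variable {c : Pt} {r : ℝ} {θ : ZMod N → ℝ}

lemma IsNCM.exists_dist_lt_of_le_pi (hccw : OnCircleCCW N p) (hσ : IsNCM N p σ)
    (hθ : IsCCWParam p c r θ) {i : ZMod N} (hi : i.val < (σ i).val)
    (hπ : θ (σ i) - θ i ≤ π) (hne : σ i ≠ i + 1) :
    ∃ j, dist (p j) (p (σ j)) < dist (p i) (p (σ i)) := by
  have hk := ZMod.val_lt (σ i)
  have hN : N ≠ 1 := by omega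
  have h1 : (1 : ZMod N).val = 1 := ZMod.val_one'' hN
  have hj : (i + 1).val = i.val + 1 := by rw [ZMod.val_add_of_lt (by omega), h1]
  have hjk : (i + 1).val ∈ Ioo i.val (σ i).val :=
    ⟨by omega, (by omega : (i + 1).val ≤ (σ i).val).lt_of_ne
      fun h => hne (ZMod.val_injective N h).symm⟩
  have hm := hσ.val_mem_Ioo hccw hjk
  refine ⟨i + 1, ?_⟩
  simp only [hθ.eq_circlePt]
  exact dist_circlePt_lt_of_mem_Ioo hθ.pos
    ⟨hθ.lt_of_val_lt _ _ hjk.1, hθ.lt_of_val_lt _ _ hjk.2⟩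
    ⟨hθ.lt_of_val_lt _ _ hm.1, hθ.lt_of_val_lt _ _ hm.2⟩ hπ

lemma IsNCM.exists_dist_lt_of_pi_le (hccw : OnCircleCCW N p) (hσ : IsNCM N p σ)
    (hθ : IsCCWParam p c r θ) {i : ZMod N} (hi : i.val < (σ i).val)
    (hπ : π ≤ θ (σ i) - θ i) (hne : σ i ≠ i - 1) :
    ∃ j, dist (p j) (p (σ j)) < dist (p i) (p (σ i)) := by
  have hk := ZMod.val_lt (σ i)
  set e := i - 1
  have he : e.val ∉ Icc i.val (σ i).val := by
    have hi_val := ZMod.val_add e 1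
    have he_lt := ZMod.val_lt e
    have hek : e.val ≠ (σ i).val := fun h => hne (ZMod.val_injective N h).symm
    rw [sub_add_cancel, ZMod.val_one'' (by omega)] at hi_val
    rcases (by omega : e.val + 1 < N ∨ e.val + 1 = N) with h | h
    · rw [Nat.mod_eq_of_lt h] at hi_val
      simp only [mem_Icc]; omega
    · rw [h, Nat.mod_self] at hi_val
      simp only [mem_Icc]; omega
  -- lift the angles of points before `i` by `2π`, so that the arc from `σ i` to `i` is an interval
  let φ u := if u.val < i.val then θ u + 2 * π else θ u
  have hφ : ∀ u, u.val ∉ Icc i.val (σ i).val →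
      φ u ∈ Ioo (θ (σ i)) (θ i + 2 * π) ∧ p u = circlePt c r (φ u) := by
    intro u hu
    obtain ⟨hu0, hu2π⟩ := hθ.mem_Ico u
    have hk2π := (hθ.mem_Ico (σ i)).2
    have hi0 := (hθ.mem_Ico i).1
    by_cases h : u.val < i.val
    · have hφu : φ u = θ u + 2 * π := if_pos h
      rw [hφu, circlePt_periodic c r, ← hθ.eq_circlePt]
      exact ⟨⟨by linarith, by linarith [hθ.lt_of_val_lt u i h]⟩, rfl⟩
    · have hku : (σ i).val < u.val := by simp only [mem_Icc] at hu; omega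
      have hφu : φ u = θ u := if_neg h
      rw [hφu, ← hθ.eq_circlePt]
      exact ⟨⟨hθ.lt_of_val_lt _ _ hku, by linarith⟩, rfl⟩
  obtain ⟨he_mem, he_eq⟩ := hφ e he
  obtain ⟨hσe_mem, hσe_eq⟩ := hφ (σ e) (hσ.val_notMem_Icc hccw he)
  refine ⟨e, ?_⟩
  rw [he_eq, hσe_eq, dist_comm (p i), hθ.eq_circlePt i, hθ.eq_circlePt (σ i),
    ← circlePt_periodic c r (θ i)]
  exact dist_circlePt_lt_of_mem_Ioo hθ.pos he_mem hσe_mem (by linarith)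

lemma IsNCM.eq_add_one_or_eq_sub_one_of_val_lt (hccw : OnCircleCCW N p) (hσ : IsNCM N p σ)
    {i : ZMod N} (hmin : ∀ j, dist (p i) (p (σ i)) ≤ dist (p j) (p (σ j)))
    (hi : i.val < (σ i).val) : σ i = i + 1 ∨ σ i = i - 1 := by
  obtain ⟨c, r, θ, hθ⟩ := hccw.exists_isCCWParam
  by_contra! h
  obtain ⟨j, hj⟩ := (le_total (θ (σ i) - θ i) π).elim
    (hσ.exists_dist_lt_of_le_pi hccw hθ hi · h.1) (hσ.exists_dist_lt_of_pi_le hccw hθ hi · h.2)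
  exact (hmin j).not_gt hj

end

/-- For `2n` distinct points on a common circle in counterclockwise order,
every minimum-length edge of a perfect non-crossing matching is a boundary edge. -/
theorem min_edge_is_boundary (n : ℕ) (hn : 0 < n) (p : ZMod (2 * n) → Pt)
    (hccw : OnCircleCCW (2 * n) p) (σ : ZMod (2 * n) → ZMod (2 * n))
    (hσ : IsNCM (2 * n) p σ) (i : ZMod (2 * n))
    (hmin : ∀ j : ZMod (2 * n), dist (p i) (p (σ i)) ≤ dist (p j) (p (σ j))) :
    σ i = i + 1 ∨ σ i = i - 1 := by
  have : NeZero (2 * n) := ⟨by omega⟩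
  have hval : i.val ≠ (σ i).val := fun h => hσ.2.1 i (ZMod.val_injective _ h).symm
  rcases hval.lt_or_gt with hlt | hgt
  · exact hσ.eq_add_one_or_eq_sub_one_of_val_lt hccw hmin hlt
  · have hmin' : ∀ j, dist (p (σ i)) (p (σ (σ i))) ≤ dist (p j) (p (σ j)) := by
      rw [hσ.1 i, dist_comm]; exact hmin
    have := hσ.eq_add_one_or_eq_sub_one_of_val_lt hccw hmin' (by rwa [hσ.1 i])
    rw [hσ.1 i] at this
    exact this.symm.imp (fun h => eq_add_of_sub_eq h.symm) (fun h => eq_sub_of_add_eq h.symm)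
end
end

section
/- Let p_0, p_1, …, p_{2n−1} be 2n distinct points on a common circle in counterclockwise order, and let F ⊆ {0,1,…,2n−1} index a set of forbidden boundary edges (i ∈ F means the boundary edge {p_i, p_{i+1}} is forbidden; all other edges are allowed). Then there exists a perfect non-crossing matching of the points containing no forbidden edge if and only if F does not contain n cyclically consecutive indices, i.e., there is no j such that j, j+1, …, j+n−1 (all taken modulo 2n) all belong to F. -/
noncomputable section

/-!
Read from a base point `β`, a perfect matching of the points is an involution `ρ` of the
offsets `0, …, N - 1`; since the points are in convex position, two chords meet exactly when
their ends interleave, so non-crossing means that no `a < b < ρ a < ρ b`.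

If `F` contains the run `j, …, j + n - 1`, read the matching from `j`: by pigeonhole some
chord has both ends among the `n + 1` offsets `0, …, n`, and the innermost chord nested in
it joins two consecutive offsets `k, k + 1` with `k < n`, a forbidden edge.

Conversely, if `F` contains no run of length `n`, either two antipodal edges `s`, `s + n` are
allowed, and the rainbow around them has no other boundary edge, or there are three allowed
edges whose cyclic distances are all less than `n`; these are the centres of three rainbows
of even lengths covering the circle, whose only boundary edges are their centres.
-/

lemma det2_sub_rotate (a b c : Pt) : det2 (b - a) (c - a) = det2 (c - b) (a - b) := by
  simp only [det2, PiLp.sub_apply]; ring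

lemma det2_swap (u v : Pt) : det2 u v = -det2 v u := by
  simp only [det2]; ring

lemma segment_inter_segment_eq_empty_of_det2_pos {a b c d : Pt}
    (hc : 0 < det2 (b - a) (c - a)) (hd : 0 < det2 (b - a) (d - a)) :
    segment ℝ a b ∩ segment ℝ c d = ∅ := by
  refine Set.eq_empty_of_forall_notMem fun x ⟨hab, hcd⟩ => ?_
  obtain ⟨u, v, -, -, huv, rfl⟩ := hab
  obtain ⟨s, t, hs, ht, hst, hx⟩ := hcd
  obtain rfl := eq_sub_of_add_eq huv
  obtain rfl := eq_sub_of_add_eq hst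
  -- `x ↦ det2 (b - a) (x - a)` is affine, vanishes on the line `ab` and is positive at `c`, `d`
  have h0 : det2 (b - a) ((1 - v) • a + v • b - a) = 0 := by
    simp only [det2, PiLp.add_apply, PiLp.sub_apply, PiLp.smul_apply, smul_eq_mul]; ring
  have hpos : det2 (b - a) ((1 - v) • a + v • b - a) =
      (1 - t) * det2 (b - a) (c - a) + t * det2 (b - a) (d - a) := by
    rw [← hx]
    simp only [det2, PiLp.add_apply, PiLp.sub_apply, PiLp.smul_apply, smul_eq_mul]; ring
  nlinarith [mul_nonneg hs hc.le, mul_nonneg ht hd.le]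

lemma segment_inter_segment_nonempty_of_det2 {a b c d : Pt}
    (hb : det2 (c - a) (b - a) < 0) (hd : 0 < det2 (c - a) (d - a))
    (ha : 0 < det2 (d - b) (a - b)) (hc : det2 (d - b) (c - b) < 0) :
    (segment ℝ a c ∩ segment ℝ b d).Nonempty := by
  set D₁ := det2 (c - a) (b - a)
  set D₂ := det2 (c - a) (d - a)
  set E₁ := det2 (d - b) (a - b)
  set E₂ := det2 (d - b) (c - b)
  have hsum : -E₂ + E₁ = D₂ + -D₁ := by
    simp only [D₁, D₂, E₁, E₂, det2, PiLp.sub_apply]; ring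
  -- Cramer's rule for the intersection of the lines `ac` and `bd`, in two ways
  have hcramer : (-E₂) • a + E₁ • c = D₂ • b + (-D₁) • d := by
    ext i; fin_cases i <;>
    · simp only [D₁, D₂, E₁, E₂, det2, PiLp.add_apply, PiLp.sub_apply, PiLp.smul_apply,
        smul_eq_mul, Fin.zero_eta, Fin.mk_one]; ring
  refine ⟨_, mem_segment_iff_div.2 ⟨-E₂, E₁, by linarith, ha.le, by linarith, rfl⟩,
    mem_segment_iff_div.2 ⟨D₂, -D₁, hd.le, by linarith, by linarith, ?_⟩⟩
  simp only [div_eq_inv_mul, mul_smul, ← smul_add, hsum, hcramer]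

def CCWOrdered (N : ℕ) (P : ℕ → Pt) : Prop :=
  ∀ i j k, i < j → j < k → k < N → 0 < det2 (P j - P i) (P k - P i)

lemma OnCircleCCW.ccwOrdered_rotate {N : ℕ} [NeZero N] {p : ZMod N → Pt}
    (hp : OnCircleCCW N p) (β : ZMod N) : CCWOrdered N (fun m => p (β + m)) := by
  have hval : ∀ m < N, (β + m).val = β.val + m ∨ (β + m).val + N = β.val + m := by
    intro m hm
    rcases lt_or_ge (β.val + (m : ZMod N).val) N with h | h
    · left; rw [ZMod.val_add_of_lt h, ZMod.val_natCast_of_lt hm]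
    · right; have := ZMod.val_add_val_of_le h; rw [ZMod.val_natCast_of_lt hm] at this; omega
  intro i j k hij hjk hk
  have := ZMod.val_lt β
  have hi := hval i (by omega)
  have hj := hval j (by omega)
  have hk' := hval k hk
  set u := β + (i : ZMod N)
  set v := β + (j : ZMod N)
  set w := β + (k : ZMod N)
  -- increasing offsets from `β` give a cyclic rotation of an increasing triple of values
  obtain h | h | h : (u.val < v.val ∧ v.val < w.val) ∨ (w.val < u.val ∧ u.val < v.val) ∨
      (v.val < w.val ∧ w.val < u.val) := by
    have := ZMod.val_lt u; have := ZMod.val_lt v; have := ZMod.val_lt w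
    omega
  · exact hp.2.2 u v w h.1 h.2
  · rw [det2_sub_rotate, det2_sub_rotate]; exact hp.2.2 w u v h.1 h.2
  · rw [det2_sub_rotate]; exact hp.2.2 v w u h.1 h.2

namespace CCWOrdered

variable {N : ℕ} {P : ℕ → Pt}

lemma segment_inter_segment_eq_empty_of_separated (hP : CCWOrdered N P) {a b c d : ℕ}
    (hab : a < b) (hbc : b < c) (hcd : c < d) (hd : d < N) :
    segment ℝ (P a) (P b) ∩ segment ℝ (P c) (P d) = ∅ :=
  segment_inter_segment_eq_empty_of_det2_pos (hP a b c hab hbc (by omega))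
    (hP a b d hab (by omega) hd)

lemma segment_inter_segment_eq_empty_of_nested (hP : CCWOrdered N P) {a b c d : ℕ}
    (hab : a < b) (hbc : b < c) (hcd : c < d) (hd : d < N) :
    segment ℝ (P a) (P d) ∩ segment ℝ (P b) (P c) = ∅ := by
  rw [segment_symm]
  refine segment_inter_segment_eq_empty_of_det2_pos ?_ ?_ <;> rw [det2_sub_rotate]
  · exact hP a b d hab (by omega) hd
  · exact hP a c d (by omega) hcd hd

lemma segment_inter_segment_nonempty_of_interleaved (hP : CCWOrdered N P) {a b c d : ℕ}
    (hab : a < b) (hbc : b < c) (hcd : c < d) (hd : d < N) :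
    (segment ℝ (P a) (P c) ∩ segment ℝ (P b) (P d)).Nonempty := by
  refine segment_inter_segment_nonempty_of_det2 ?_ (hP a c d (by omega) hcd hd) ?_ ?_
  · rw [det2_swap, neg_neg_iff_pos]; exact hP a b c hab hbc (by omega)
  · rw [← det2_sub_rotate]; exact hP a b d hab (by omega) hd
  · rw [det2_swap, neg_neg_iff_pos]; exact hP b c d hbc hcd hd

end CCWOrdered

structure IsNoncrossingMatching (N : ℕ) (ρ : ℕ → ℕ) : Prop where
  lt : ∀ k < N, ρ k < N
  involutive : ∀ k < N, ρ (ρ k) = k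
  ne_self : ∀ k < N, ρ k ≠ k
  noncrossing : ∀ a b, b < N → ¬ (a < b ∧ b < ρ a ∧ ρ a < ρ b)

namespace IsNoncrossingMatching

variable {N : ℕ} {ρ : ℕ → ℕ}

lemma exists_adjacent_of_lt (hρ : IsNoncrossingMatching N ρ) {a : ℕ} (ha : a < ρ a)
    (haN : ρ a < N) : ∃ k, a ≤ k ∧ k < ρ a ∧ ρ k = k + 1 := by
  induction h : ρ a - a using Nat.strong_induction_on generalizing a with
  | _ g ih =>
  by_cases hadj : ρ a = a + 1
  · exact ⟨a, le_rfl, ha, hadj⟩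
  -- the chord at `a + 1` lies strictly inside the chord `(a, ρ a)`
  have hinv := hρ.involutive a (by omega)
  have hinv' := hρ.involutive (a + 1) (by omega)
  have hne := hρ.ne_self (a + 1) (by omega)
  have hlt := hρ.lt (a + 1) (by omega)
  have hnc := hρ.noncrossing a (a + 1) (by omega)
  have hnc' := hρ.noncrossing (ρ (a + 1)) a (by omega)
  have hne_a : ρ (a + 1) ≠ a := fun he => hadj (by rw [he] at hinv'; exact hinv')
  have hne_ρa : ρ (a + 1) ≠ ρ a := fun he => by
    have := congrArg ρ he; rw [hinv, hinv'] at this; omega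
  rw [hinv'] at hnc'
  have hin : a + 1 < ρ (a + 1) ∧ ρ (a + 1) < ρ a := by omega
  obtain ⟨k, hk1, hk2, hk3⟩ := ih _ (by omega) hin.1 (by omega) rfl
  exact ⟨k, by omega, by omega, hk3⟩

lemma exists_lt_apply_le_half {n : ℕ} (hρ : IsNoncrossingMatching (2 * n) ρ) (hn : 0 < n) :
    ∃ a, a < ρ a ∧ ρ a ≤ n := by
  by_contra! h
  -- otherwise `ρ` injects `0, …, n` into the `n - 1` points `n + 1, …, 2n - 1`
  have hmaps : Set.MapsTo ρ (Finset.range (n + 1)) (Finset.Ioo n (2 * n)) := by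
    intro a ha
    simp only [Finset.coe_range, Set.mem_Iio, Finset.coe_Ioo, Set.mem_Ioo] at ha ⊢
    have hinv := hρ.involutive a (by omega)
    refine ⟨?_, hρ.lt a (by omega)⟩
    rcases lt_or_gt_of_ne (hρ.ne_self a (by omega)) with hlt | hlt
    · have := h (ρ a) (by rwa [hinv]); omega
    · exact h a hlt
  have hinj : Set.InjOn ρ (Finset.range (n + 1)) := fun a ha b hb hab => by
    simp only [Finset.coe_range, Set.mem_Iio] at ha hb
    rw [← hρ.involutive a (by omega), hab, hρ.involutive b (by omega)]
  have := Finset.card_le_card_of_injOn ρ hmaps hinj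
  simp only [Finset.card_range, Nat.card_Ioo] at this
  omega

lemma exists_adjacent {n : ℕ} (hρ : IsNoncrossingMatching (2 * n) ρ) (hn : 0 < n) :
    ∃ k < n, ρ k = k + 1 := by
  obtain ⟨a, ha, han⟩ := hρ.exists_lt_apply_le_half hn
  obtain ⟨k, -, hk, hadj⟩ := hρ.exists_adjacent_of_lt ha (by omega)
  exact ⟨k, by omega, hadj⟩

end IsNoncrossingMatching

lemma CCWOrdered.segment_inter_segment_eq_empty {N : ℕ} {P : ℕ → Pt} {ρ : ℕ → ℕ}
    (hP : CCWOrdered N P) (hρ : IsNoncrossingMatching N ρ) {a c : ℕ} (ha : a < N) (hc : c < N)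
    (hca : c ≠ a) (hcρa : c ≠ ρ a) :
    segment ℝ (P a) (P (ρ a)) ∩ segment ℝ (P c) (P (ρ c)) = ∅ := by
  have hρinj : ∀ {x y}, x < N → y < N → ρ x = ρ y → x = y := fun hx hy h => by
    rw [← hρ.involutive _ hx, h, hρ.involutive _ hy]
  wlog haρ : a < ρ a generalizing a
  · have := this (hρ.lt a ha) hcρa (by rwa [hρ.involutive a ha])
      (by have := hρ.ne_self a ha; rw [hρ.involutive a ha]; omega)
    rwa [hρ.involutive a ha, segment_symm ℝ (P (ρ a))] at this
  wlog hcρ : c < ρ c generalizing c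
  · have := this (hρ.lt c hc) (fun h => hcρa (by rw [← h, hρ.involutive c hc]))
      (fun h => hca (hρinj hc ha h))
      (by have := hρ.ne_self c hc; rw [hρ.involutive c hc]; omega)
    rwa [hρ.involutive c hc, segment_symm ℝ (P (ρ c))] at this
  wlog hac : a < c generalizing a c
  · rw [Set.inter_comm]
    exact this hc hcρ ha hca.symm (fun h => hcρa (by rw [h, hρ.involutive c hc])) haρ (by omega)
  have hnc := hρ.noncrossing a c hc
  have hρne : ρ c ≠ ρ a := fun h => hca (hρinj hc ha h)
  rcases lt_or_gt_of_ne hcρa with h | h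
  · exact hP.segment_inter_segment_eq_empty_of_nested hac hcρ (by omega) (hρ.lt a ha)
  · exact hP.segment_inter_segment_eq_empty_of_separated haρ h hcρ (hρ.lt c hc)

lemma natCast_zmod_inj_of_lt {N a b : ℕ} (ha : a < N) (hb : b < N) :
    (a : ZMod N) = b ↔ a = b :=
  ⟨fun h => by
    simpa [ZMod.val_natCast_of_lt ha, ZMod.val_natCast_of_lt hb] using congrArg ZMod.val h,
   congrArg Nat.cast⟩

lemma eq_add_one_or_of_natCast_zmod_eq {N a b : ℕ} (ha : a < N) (hb : b < N)
    (h : (a : ZMod N) = b + 1) : a = b + 1 ∨ (b + 1 = N ∧ a = 0) := by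
  rw [← Nat.cast_succ, ZMod.natCast_eq_natCast_iff', Nat.mod_eq_of_lt ha] at h
  rcases (Nat.succ_le_of_lt hb).lt_or_eq with hlt | heq
  · exact .inl (h.trans (Nat.mod_eq_of_lt hlt))
  · rw [heq, Nat.mod_self] at h; exact .inr ⟨heq, h⟩

def liftOffset {N : ℕ} (β : ZMod N) (ρ : ℕ → ℕ) (x : ZMod N) : ZMod N :=
  β + (ρ (x - β).val : ℕ)

section Offsets

variable {N : ℕ} [NeZero N] {p : ZMod N → Pt}

lemma add_natCast_sub_val (β x : ZMod N) : β + ((x - β).val : ZMod N) = x := by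
  rw [ZMod.natCast_zmod_val, add_sub_cancel]

lemma IsNCM.isNoncrossingMatching_offset {σ : ZMod N → ZMod N} (hσ : IsNCM N p σ)
    (hp : OnCircleCCW N p) (β : ZMod N) :
    IsNoncrossingMatching N (fun k => (σ (β + k) - β).val) where
  lt _ _ := ZMod.val_lt _
  involutive k hk := by
    simp only [add_natCast_sub_val, hσ.1, add_sub_cancel_left, ZMod.val_natCast_of_lt hk]
  ne_self k hk h := hσ.2.1 (β + k) (by rw [← add_natCast_sub_val β (σ (β + k)), h])
  noncrossing a b hb := by
    rintro ⟨hab, hbρ, hρρ⟩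
    have hcross := (hp.ccwOrdered_rotate β).segment_inter_segment_nonempty_of_interleaved hab
      hbρ hρρ (ZMod.val_lt _)
    simp only [add_natCast_sub_val] at hcross
    rw [hσ.2.2 (β + a) (β + b) ?_ ?_] at hcross
    · exact Set.not_nonempty_empty hcross
    · rw [Ne, add_right_inj, natCast_zmod_inj_of_lt hb (by omega)]; omega
    · rw [← add_natCast_sub_val β (σ (β + a)), Ne, add_right_inj,
        natCast_zmod_inj_of_lt hb (ZMod.val_lt _)]
      omega

lemma liftOffset_sub_val {ρ : ℕ → ℕ} (hρ : IsNoncrossingMatching N ρ) (β x : ZMod N) :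
    (liftOffset β ρ x - β).val = ρ (x - β).val := by
  rw [liftOffset, add_sub_cancel_left, ZMod.val_natCast_of_lt (hρ.lt _ (ZMod.val_lt _))]

lemma isNCM_liftOffset (hp : OnCircleCCW N p) {ρ : ℕ → ℕ} (hρ : IsNoncrossingMatching N ρ)
    (β : ZMod N) : IsNCM N p (liftOffset β ρ) := by
  have hoff := liftOffset_sub_val hρ β
  have hval_inj : ∀ {x y : ZMod N}, (x - β).val = (y - β).val → x = y := fun {x y} h => by
    rw [← add_natCast_sub_val β x, h, add_natCast_sub_val]
  refine ⟨fun x => ?_, fun x h => ?_, fun i j hji hjσ => ?_⟩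
  · rw [liftOffset, hoff, hρ.involutive _ (ZMod.val_lt _), add_natCast_sub_val]
  · exact hρ.ne_self _ (ZMod.val_lt _) (by rw [← hoff, h])
  · have := (hp.ccwOrdered_rotate β).segment_inter_segment_eq_empty hρ (ZMod.val_lt (i - β))
      (ZMod.val_lt (j - β)) (fun h => hji (hval_inj h))
      (fun h => hjσ (hval_inj (h.trans (hoff i).symm)))
    rwa [← hoff, ← hoff, add_natCast_sub_val, add_natCast_sub_val, add_natCast_sub_val,
      add_natCast_sub_val] at this

end Offsets

/-- The blocks `[0, 2x)`, `[2x, 2x + 2y)`, `[2x + 2y, 2(x + y + z))`, each matched by nested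
chords around its centre. -/
def threeRainbow (x y z q : ℕ) : ℕ :=
  if q < 2 * x then 2 * x - 1 - q
  else if q < 2 * (x + y) then 2 * (2 * x + y) - 1 - q
  else 2 * (2 * x + 2 * y + z) - 1 - q

lemma isNoncrossingMatching_threeRainbow (x y z : ℕ) :
    IsNoncrossingMatching (2 * (x + y + z)) (threeRainbow x y z) where
  lt q hq := by unfold threeRainbow; split_ifs <;> omega
  involutive q hq := by unfold threeRainbow; split_ifs <;> omega
  ne_self q hq := by unfold threeRainbow; split_ifs <;> omega
  noncrossing a b hb := by unfold threeRainbow; split_ifs <;> omega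

lemma threeRainbow_cyclic_succ {x y z q : ℕ} (hx : 0 < x) (hq : q < 2 * (x + y + z))
    (h : threeRainbow x y z q = q + 1 ∨
      (q + 1 = 2 * (x + y + z) ∧ threeRainbow x y z q = 0)) :
    q = x - 1 ∨ (0 < y ∧ q = 2 * x + y - 1) ∨ (0 < z ∧ q = 2 * x + 2 * y + z - 1) ∨
      (y + z = 0 ∧ q = 2 * x - 1) := by
  unfold threeRainbow at h; split_ifs at h <;> omega

lemma exists_isNCM_avoiding_of_centres {n x y z : ℕ} {p : ZMod (2 * n) → Pt}
    (hp : OnCircleCCW (2 * n) p) (F : Set (ZMod (2 * n))) (hx : 0 < x) (hxyz : x + y + z = n)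
    (c : ZMod (2 * n)) (h₁ : c ∉ F) (h₂ : 0 < y → c + ((x + y : ℕ) : ZMod (2 * n)) ∉ F)
    (h₃ : 0 < z → c + ((n + y : ℕ) : ZMod (2 * n)) ∉ F)
    (h₄ : y + z = 0 → c + (n : ZMod (2 * n)) ∉ F) :
    ∃ σ, IsNCM (2 * n) p σ ∧ ∀ i ∈ F, σ i ≠ i + 1 := by
  subst hxyz
  have hρ := isNoncrossingMatching_threeRainbow x y z
  have : NeZero (2 * (x + y + z)) := ⟨by omega⟩
  -- the first block is centred at `c`
  set β := c - ((x - 1 : ℕ) : ZMod (2 * (x + y + z)))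
  refine ⟨liftOffset β (threeRainbow x y z), isNCM_liftOffset hp hρ β, fun i hi hσi => ?_⟩
  set q := (i - β).val
  have hq : q < 2 * (x + y + z) := ZMod.val_lt _
  have hiq : i = β + (q : ZMod (2 * (x + y + z))) := (add_natCast_sub_val β i).symm
  have hcentre : ∀ m : ℕ, q = x - 1 + m → c + (m : ZMod (2 * (x + y + z))) ∈ F := by
    intro m hm
    rwa [hiq, hm, Nat.cast_add, ← add_assoc, sub_add_cancel c] at hi
  have hsucc : ((threeRainbow x y z q : ℕ) : ZMod (2 * (x + y + z))) = q + 1 := by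
    apply add_left_cancel (a := β)
    rw [← add_assoc, add_natCast_sub_val]
    exact hσi
  rcases threeRainbow_cyclic_succ hx hq
      (eq_add_one_or_of_natCast_zmod_eq (hρ.lt q hq) hq hsucc) with
    h | ⟨hy, h⟩ | ⟨hz, h⟩ | ⟨hyz, h⟩
  · exact h₁ (by simpa using hcentre 0 (by omega))
  · exact h₂ hy (hcentre _ (by omega))
  · exact h₃ hz (hcentre _ (by omega))
  · exact h₄ hyz (hcentre _ (by omega))

lemma exists_triple_with_gaps_lt {n : ℕ} {f : ℕ → Prop} (h₀ : f 0)
    (hwin : ∀ m, ∃ k < n, f (m + k)) (hanti : ∀ m, f m → ¬ f (m + n)) :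
    ∃ A C, 0 < A ∧ A < n ∧ n < C ∧ C < A + n ∧ f A ∧ f C := by
  classical
  obtain ⟨k, hk, hfk⟩ := hwin 1
  have hkn : 1 + k ≠ n := fun h => hanti 0 h₀ (by rwa [zero_add, ← h])
  set A := Nat.findGreatest (fun m => 0 < m ∧ f m) (n - 1)
  obtain ⟨hA0, hfA⟩ : 0 < A ∧ f A :=
    Nat.findGreatest_spec (P := fun m => 0 < m ∧ f m) (m := 1 + k) (by omega) ⟨by omega, hfk⟩
  have hAn : A ≤ n - 1 := Nat.findGreatest_le _
  -- the next point after `A` lies beyond `n`, by maximality of `A`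
  obtain ⟨l, hl, hfl⟩ := hwin (A + 1)
  have hC : n < A + 1 + l := by
    by_contra! h
    rcases h.lt_or_eq with h | h
    · exact Nat.findGreatest_is_greatest (show A < A + 1 + l by omega) (by omega)
        ⟨by omega, hfl⟩
    · exact hanti 0 h₀ (by rwa [zero_add, ← h])
  have hCA : A + 1 + l ≠ A + n := fun h => hanti A hfA (by rwa [← h])
  exact ⟨A, A + 1 + l, hA0, by omega, hC, by omega, hfA, hfl⟩

/-- Let `F` index a set of forbidden boundary edges (`i ∈ F` means the
boundary edge `{p i, p (i+1)}` is forbidden). A perfect non-crossing matching avoiding all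
forbidden edges exists iff `F` does not contain `n` cyclically consecutive indices. -/
theorem matching_avoiding_forbidden_iff (n : ℕ) (hn : 0 < n) (p : ZMod (2 * n) → Pt)
    (hccw : OnCircleCCW (2 * n) p) (F : Set (ZMod (2 * n))) :
    (∃ σ, IsNCM (2 * n) p σ ∧ ∀ i ∈ F, σ i ≠ i + 1) ↔
      ¬ ∃ j : ZMod (2 * n), ∀ k : ℕ, k < n → j + (k : ZMod (2 * n)) ∈ F := by
  have : NeZero (2 * n) := ⟨by omega⟩
  constructor
  · rintro ⟨σ, hσ, havoid⟩ ⟨j, hrun⟩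
    obtain ⟨k, hk, hadj⟩ := (hσ.isNoncrossingMatching_offset hccw j).exists_adjacent hn
    refine havoid _ (hrun k hk) ?_
    rw [← add_natCast_sub_val j (σ (j + k)), hadj, Nat.cast_succ, add_assoc]
  · intro hrun
    push Not at hrun
    by_cases hanti : ∃ s, s ∉ F ∧ s + (n : ZMod (2 * n)) ∉ F
    · obtain ⟨s, hs, hsn⟩ := hanti
      exact exists_isNCM_avoiding_of_centres hccw F (y := 0) (z := 0) hn (by simp) s hs
        (absurd · (lt_irrefl 0)) (absurd · (lt_irrefl 0)) fun _ => hsn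
    push Not at hanti
    obtain ⟨d, -, hd⟩ := hrun 0
    rw [zero_add] at hd
    obtain ⟨A, C, hA0, hAn, hnC, hCA, hA, hC⟩ :=
      exists_triple_with_gaps_lt (f := fun m : ℕ => (d : ZMod (2 * n)) + m ∉ F)
        (by simpa using hd)
        (fun m => by
          obtain ⟨k, hk, hkF⟩ := hrun (d + m)
          exact ⟨k, hk, by rwa [Nat.cast_add, ← add_assoc]⟩)
        (fun m hm hmn => hmn (by rw [Nat.cast_add, ← add_assoc]; exact hanti _ hm))
    exact exists_isNCM_avoiding_of_centres hccw F (x := A + n - C) (y := C - n) (z := n - A)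
      (by omega) (by omega) d hd (fun _ => by rwa [show A + n - C + (C - n) = A by omega])
      (fun _ => by rwa [show n + (C - n) = C by omega]) (fun h => absurd h (by omega))
end
end
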